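/- arXiv:1412.4845 — 5 statements merged into one kernel-verified Lean document; each statement's English description precedes it below -/
import Mathlib

section
/- (Theorem 1) The importance-sampling variance V(θ) = ∫ φ²(x)f²(x)/f_θ(x) dx − I², defined to be +∞ when A(θ) = ∞, is a convex function of the natural parameter θ on ℝ^p (taking values in ℝ ∪ {+∞}). Equivalently, for any measurable G : ℝ^k → [0,∞], the map θ ↦ exp(A(θ)) · ∫ G(x) exp(−θᵀT(x)) dx is convex on ℝ^p with values in [0, +∞]. -/
open MeasureTheory Real
open scoped ENNReal NNReal RealInnerProductSpace

/-- Young / weighted AM–GM in `ℝ≥0∞`. -/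
lemma ennreal_geom_mean_le {η : ℝ} (hη0 : 0 < η) (hη1 : η < 1) (a b : ℝ≥0∞) :
    a ^ η * b ^ (1 - η) ≤ ENNReal.ofReal η * a + ENNReal.ofReal (1 - η) * b := by
  have h1η : (0:ℝ) < 1 - η := by linarith
  rcases eq_or_ne a ∞ with ha | ha
  · have : ENNReal.ofReal η * a = ∞ := by
      rw [ha, ENNReal.mul_top]
      simpa [ENNReal.ofReal_eq_zero] using hη0
    simp [this]
  rcases eq_or_ne b ∞ with hb | hb
  · have : ENNReal.ofReal (1 - η) * b = ∞ := by
      rw [hb, ENNReal.mul_top]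
      simpa [ENNReal.ofReal_eq_zero] using h1η
    simp [this]
  lift a to ℝ≥0 using ha
  lift b to ℝ≥0 using hb
  have := NNReal.geom_mean_le_arith_mean2_weighted
    (⟨η, hη0.le⟩ : ℝ≥0) (⟨1 - η, h1η.le⟩ : ℝ≥0) a b (NNReal.eq (show η + (1 - η) = 1 by ring))
  rw [← ENNReal.coe_rpow_of_nonneg _ hη0.le, ← ENNReal.coe_rpow_of_nonneg _ h1η.le,
    ← ENNReal.coe_mul, ENNReal.ofReal, ENNReal.ofReal, ← ENNReal.coe_mul, ← ENNReal.coe_mul,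
    ← ENNReal.coe_add, ENNReal.coe_le_coe]
  convert this using 3 <;> [rfl; rfl; (congr 1; exact Real.toNNReal_of_nonneg hη0.le);
    (congr 1; exact Real.toNNReal_of_nonneg h1η.le)]

/-- Hölder: log-convexity inequality for lintegrals. -/
lemma lintegral_geom_mean_le {α : Type*} [MeasurableSpace α] (μ : Measure α)
    {u v : α → ℝ≥0∞} (hu : AEMeasurable u μ) (hv : AEMeasurable v μ)
    {η : ℝ} (hη0 : 0 < η) (hη1 : η < 1) :
    ∫⁻ x, (u x) ^ η * (v x) ^ (1 - η) ∂μ ≤ (∫⁻ x, u x ∂μ) ^ η * (∫⁻ x, v x ∂μ) ^ (1 - η) := by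
  have h1η : (0:ℝ) < 1 - η := by linarith
  have hpq : (1/η).HolderConjugate (1/(1-η)) := by
    constructor
    · rw [one_div, one_div, inv_inv, inv_inv, inv_one]; ring
    · exact one_div_pos.mpr hη0
    · exact one_div_pos.mpr h1η
  have hmu : AEMeasurable (fun x => (u x) ^ η) μ :=
    (ENNReal.continuous_rpow_const.measurable.comp_aemeasurable hu)
  have hmv : AEMeasurable (fun x => (v x) ^ (1 - η)) μ :=
    (ENNReal.continuous_rpow_const.measurable.comp_aemeasurable hv)
  have := ENNReal.lintegral_mul_le_Lp_mul_Lq μ hpq hmu hmv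
  simpa [← ENNReal.rpow_mul, one_div, mul_inv_cancel₀ hη0.ne', mul_inv_cancel₀ h1η.ne',
    ENNReal.rpow_one] using this

/-- Theorem 1: the importance-sampling variance is a convex function of the
natural parameter `θ`.  Equivalently (as in the statement), for any measurable
`G : ℝ^k → [0,∞]`, the `[0,∞]`-valued map
`θ ↦ exp(A(θ)) · ∫ G(x) exp(−θᵀT(x)) dx = Z(θ) · ∫ G(x) exp(−θᵀT(x)) dx`
is convex on `ℝ^p`. -/
theorem importanceSamplingVariance_convex {k p : ℕ}
    (T : EuclideanSpace ℝ (Fin k) → EuclideanSpace ℝ (Fin p)) (hT : Measurable T)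
    (h : EuclideanSpace ℝ (Fin k) → ℝ) (hh : Measurable h) (hh0 : ∀ x, 0 ≤ h x)
    (Z : EuclideanSpace ℝ (Fin p) → ℝ≥0∞)
    (hZ : ∀ θ, Z θ = ∫⁻ y, ENNReal.ofReal (Real.exp ⟪θ, T y⟫ * h y))
    (G : EuclideanSpace ℝ (Fin k) → ℝ≥0∞) (hG : Measurable G)
    (W : EuclideanSpace ℝ (Fin p) → ℝ≥0∞)
    (hW : ∀ θ, W θ = Z θ * ∫⁻ x, G x * ENNReal.ofReal (Real.exp (-⟪θ, T x⟫)))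
    (θ₁ θ₂ : EuclideanSpace ℝ (Fin p)) (η : ℝ) (hη0 : 0 ≤ η) (hη1 : η ≤ 1) :
    W (η • θ₁ + (1 - η) • θ₂) ≤ ENNReal.ofReal η * W θ₁ + ENNReal.ofReal (1 - η) * W θ₂ := by
  rcases eq_or_lt_of_le hη0 with rfl | hη0'
  · simp
  rcases eq_or_lt_of_le hη1 with rfl | hη1'
  · simp
  have h1η : (0:ℝ) < 1 - η := by linarith
  set θ := η • θ₁ + (1 - η) • θ₂ with hθ
  -- pointwise inner product decomposition
  have hinner : ∀ y, ⟪θ, T y⟫ = η * ⟪θ₁, T y⟫ + (1 - η) * ⟪θ₂, T y⟫ := by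
    intro y
    simp [hθ, inner_add_left, real_inner_smul_left, Finset.mul_sum, mul_assoc]
  -- measurability helpers
  have hinner_meas : ∀ ξ : EuclideanSpace ℝ (Fin p), Measurable fun y => ⟪ξ, T y⟫ :=
    fun ξ => measurable_const.inner hT
  have haZ : ∀ ξ, Measurable fun y => ENNReal.ofReal (Real.exp ⟪ξ, T y⟫ * h y) := by
    intro ξ
    exact (((Real.measurable_exp.comp (hinner_meas ξ)).mul hh)).ennreal_ofReal
  have haJ : ∀ ξ, Measurable fun y => G y * ENNReal.ofReal (Real.exp (-⟪ξ, T y⟫)) := by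
    intro ξ
    exact hG.mul ((Real.measurable_exp.comp (hinner_meas ξ).neg).ennreal_ofReal)
  -- Z-integrand decomposition
  have hZpt : ∀ y, ENNReal.ofReal (Real.exp ⟪θ, T y⟫ * h y)
      = (ENNReal.ofReal (Real.exp ⟪θ₁, T y⟫ * h y)) ^ η
        * (ENNReal.ofReal (Real.exp ⟪θ₂, T y⟫ * h y)) ^ (1 - η) := by
    intro y
    rw [ENNReal.ofReal_rpow_of_nonneg (mul_nonneg (Real.exp_pos _).le (hh0 y)) hη0,
      ENNReal.ofReal_rpow_of_nonneg (mul_nonneg (Real.exp_pos _).le (hh0 y)) h1η.le,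
      ← ENNReal.ofReal_mul (Real.rpow_nonneg (mul_nonneg (Real.exp_pos _).le (hh0 y)) _)]
    congr 1
    rw [Real.mul_rpow (Real.exp_pos _).le (hh0 y), Real.mul_rpow (Real.exp_pos _).le (hh0 y),
      ← Real.exp_mul, ← Real.exp_mul]
    have hhsplit : h y ^ η * h y ^ (1 - η) = h y := by
      rw [← Real.rpow_add' (hh0 y) (by norm_num)]
      simp
    calc Real.exp ⟪θ, T y⟫ * h y
        = (Real.exp (⟪θ₁, T y⟫ * η) * Real.exp (⟪θ₂, T y⟫ * (1 - η))) * (h y ^ η * h y ^ (1 - η)) := by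
          rw [← Real.exp_add, hhsplit, hinner y]; ring_nf
      _ = Real.exp (⟪θ₁, T y⟫ * η) * h y ^ η * (Real.exp (⟪θ₂, T y⟫ * (1 - η)) * h y ^ (1 - η)) := by
          ring
  -- J-integrand decomposition
  have hJpt : ∀ x, G x * ENNReal.ofReal (Real.exp (-⟪θ, T x⟫))
      = (G x * ENNReal.ofReal (Real.exp (-⟪θ₁, T x⟫))) ^ η
        * (G x * ENNReal.ofReal (Real.exp (-⟪θ₂, T x⟫))) ^ (1 - η) := by
    intro x
    rw [ENNReal.mul_rpow_of_nonneg _ _ hη0, ENNReal.mul_rpow_of_nonneg _ _ h1η.le]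
    have hGsplit : G x ^ η * G x ^ (1 - η) = G x := by
      rw [← ENNReal.rpow_add_of_nonneg _ _ hη0 h1η.le]; simp
    rw [mul_mul_mul_comm, hGsplit]
    congr 1
    rw [ENNReal.ofReal_rpow_of_nonneg (Real.exp_pos _).le hη0,
      ENNReal.ofReal_rpow_of_nonneg (Real.exp_pos _).le h1η.le,
      ← ENNReal.ofReal_mul (Real.rpow_nonneg (Real.exp_pos _).le _)]
    congr 1
    rw [← Real.exp_mul, ← Real.exp_mul, ← Real.exp_add, hinner x]
    ring_nf
  -- Hölder for both factors
  have hZle : Z θ ≤ (Z θ₁) ^ η * (Z θ₂) ^ (1 - η) := by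
    rw [hZ, hZ, hZ]
    calc ∫⁻ y, ENNReal.ofReal (Real.exp ⟪θ, T y⟫ * h y)
        = ∫⁻ y, (ENNReal.ofReal (Real.exp ⟪θ₁, T y⟫ * h y)) ^ η
            * (ENNReal.ofReal (Real.exp ⟪θ₂, T y⟫ * h y)) ^ (1 - η) := by
          simp_rw [hZpt]
      _ ≤ _ := lintegral_geom_mean_le _ (haZ θ₁).aemeasurable (haZ θ₂).aemeasurable hη0' hη1'
  have hJle : (∫⁻ x, G x * ENNReal.ofReal (Real.exp (-⟪θ, T x⟫)))
      ≤ (∫⁻ x, G x * ENNReal.ofReal (Real.exp (-⟪θ₁, T x⟫))) ^ η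
        * (∫⁻ x, G x * ENNReal.ofReal (Real.exp (-⟪θ₂, T x⟫))) ^ (1 - η) := by
    calc ∫⁻ x, G x * ENNReal.ofReal (Real.exp (-⟪θ, T x⟫))
        = ∫⁻ x, (G x * ENNReal.ofReal (Real.exp (-⟪θ₁, T x⟫))) ^ η
            * (G x * ENNReal.ofReal (Real.exp (-⟪θ₂, T x⟫))) ^ (1 - η) := by
          simp_rw [hJpt]
      _ ≤ _ := lintegral_geom_mean_le _ (haJ θ₁).aemeasurable (haJ θ₂).aemeasurable hη0' hη1'
  -- combine
  have hWle : W θ ≤ (W θ₁) ^ η * (W θ₂) ^ (1 - η) := by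
    rw [hW, hW, hW, ENNReal.mul_rpow_of_nonneg _ _ hη0, ENNReal.mul_rpow_of_nonneg _ _ h1η.le]
    calc Z θ * ∫⁻ x, G x * ENNReal.ofReal (Real.exp (-⟪θ, T x⟫))
        ≤ ((Z θ₁) ^ η * (Z θ₂) ^ (1 - η))
          * ((∫⁻ x, G x * ENNReal.ofReal (Real.exp (-⟪θ₁, T x⟫))) ^ η
            * (∫⁻ x, G x * ENNReal.ofReal (Real.exp (-⟪θ₂, T x⟫))) ^ (1 - η)) :=
          mul_le_mul' hZle hJle
      _ = _ := by ring
  exact hWle.trans (ennreal_geom_mean_le hη0' hη1' _ _)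
end

section
/- Suppose θ₀ lies in the interior of the set {θ : A(θ) < ∞ and ∫ φ²(x)f²(x)/f_θ(x) dx < ∞} and A is differentiable at θ₀ with gradient ∇A(θ₀). Then V is differentiable at θ₀ with gradient obtained by differentiating under the integral: ∇V(θ₀) = ∫ (∇A(θ₀) − T(x)) · (φ²(x)f²(x)/f_{θ₀}²(x)) · f_{θ₀}(x) dx. In particular, if X is a random variable with density f_{θ₀}, then the random vector g = (∇A(θ₀) − T(X)) · φ²(X)f²(X)/f_{θ₀}²(X) satisfies E[g] = ∇V(θ₀). -/
open MeasureTheory Real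
open scoped ENNReal RealInnerProductSpace

lemma euclid_norm_le_sum {p : ℕ} (w : EuclideanSpace ℝ (Fin p)) : ‖w‖ ≤ ∑ i, |w i| := by
  rw [EuclideanSpace.norm_eq]
  simp only [Real.norm_eq_abs, sq_abs]
  have h1 : ∑ i, w i ^ 2 ≤ (∑ i, |w i|) ^ 2 := by
    calc ∑ i, w i ^ 2 = ∑ i, |w i| ^ 2 := by simp [sq_abs]
    _ ≤ (∑ i, |w i|) ^ 2 := Finset.sum_sq_le_sq_sum_of_nonneg (fun i _ => abs_nonneg _)
  calc Real.sqrt (∑ i, w i ^ 2) ≤ Real.sqrt ((∑ i, |w i|) ^ 2) := Real.sqrt_le_sqrt h1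
  _ = ∑ i, |w i| := Real.sqrt_sq (Finset.sum_nonneg fun i _ => abs_nonneg _)

lemma tilt_hasFDerivAt {k p : ℕ} {T : EuclideanSpace ℝ (Fin k) → EuclideanSpace ℝ (Fin p)}
    (hT : Measurable T)
    {g : EuclideanSpace ℝ (Fin k) → ℝ} (hg : Measurable g) (hg0 : ∀ x, 0 ≤ g x)
    {θ₀ : EuclideanSpace ℝ (Fin p)} {ε : ℝ} (hε : 0 < ε)
    (hS : ∀ θ : EuclideanSpace ℝ (Fin p), dist θ θ₀ < ε →
        Integrable (fun x => Real.exp (-⟪θ - θ₀, T x⟫) * g x)) :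
    Integrable (fun x => g x • T x) ∧
    HasFDerivAt (fun θ => ∫ x, Real.exp (-⟪θ - θ₀, T x⟫) * g x)
      (innerSL ℝ (-∫ x, g x • T x)) θ₀ := by
  classical
  set r : ℝ := ε / (5 * (p + 1)) with hr_def
  have hp5 : (0:ℝ) < 5 * (p + 1) := by positivity
  have hr : 0 < r := div_pos hε hp5
  -- measurability of scalar maps
  have hTi : ∀ v : EuclideanSpace ℝ (Fin p), Measurable (fun x => (⟪v, T x⟫ : ℝ)) :=
    fun v => ((innerSL ℝ v).continuous.measurable).comp hT
  have hmF : ∀ θ : EuclideanSpace ℝ (Fin p),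
      Measurable (fun x => Real.exp (-⟪θ - θ₀, T x⟫) * g x) := by
    intro θ
    exact (Real.measurable_exp.comp (hTi (θ - θ₀)).neg).mul hg
  -- integrability of exponential tilts by vectors of norm < ε
  have hIv : ∀ v : EuclideanSpace ℝ (Fin p), ‖v‖ < ε →
      Integrable (fun x => Real.exp ⟪v, T x⟫ * g x) := by
    intro v hv
    have hd : dist (θ₀ - v) θ₀ < ε := by
      simpa [dist_eq_norm, sub_sub_cancel_left, norm_neg] using hv
    have := hS (θ₀ - v) hd
    have heq : (fun x => Real.exp (-⟪θ₀ - v - θ₀, T x⟫) * g x)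
        = fun x => Real.exp ⟪v, T x⟫ * g x := by
      funext x
      rw [sub_sub_cancel_left, inner_neg_left, neg_neg]
    rwa [heq] at this
  -- sign pattern vectors
  set v : Finset (Fin p) → EuclideanSpace ℝ (Fin p) := fun t =>
    (∑ i ∈ t, (2 * r) • EuclideanSpace.single i (1:ℝ))
      - ∑ i ∈ Finset.univ \ t, (2 * r) • EuclideanSpace.single i (1:ℝ) with hv_def
  have hvnorm : ∀ t : Finset (Fin p), ‖v t‖ < ε := by
    intro t
    have h1 : ∀ s : Finset (Fin p),
        ‖∑ i ∈ s, (2 * r) • EuclideanSpace.single i (1:ℝ)‖ ≤ 2 * r * p := by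
      intro s
      calc ‖∑ i ∈ s, (2 * r) • EuclideanSpace.single i (1:ℝ)‖
          ≤ ∑ i ∈ s, ‖(2 * r) • EuclideanSpace.single i (1:ℝ)‖ := norm_sum_le _ _
        _ = ∑ i ∈ s, (2 * r) := by
            apply Finset.sum_congr rfl; intro i _
            rw [norm_smul, EuclideanSpace.norm_single]
            simp [abs_of_pos, hr, mul_pos]
        _ = s.card * (2 * r) := by rw [Finset.sum_const, nsmul_eq_mul]
        _ ≤ p * (2 * r) := by
            apply mul_le_mul_of_nonneg_right _ (by positivity)
            exact_mod_cast Nat.cast_le.mpr (le_trans (Finset.card_le_univ s) (by simp))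
        _ = 2 * r * p := by ring
    have h2 : ‖v t‖ ≤ 4 * r * p := by
      calc ‖v t‖ ≤ _ + _ := norm_sub_le _ _
        _ ≤ 2 * r * p + 2 * r * p := add_le_add (h1 t) (h1 _)
        _ = 4 * r * p := by ring
    have hle : r * (5 * (p + 1)) = ε := by
      rw [hr_def]; field_simp
    have h3 : 4 * r * p < ε := by
      nlinarith [hr, (Nat.cast_nonneg p : (0:ℝ) ≤ p)]
    linarith
  have hvinner : ∀ (t : Finset (Fin p)) x,
      ⟪v t, T x⟫ = (∑ i ∈ t, 2 * r * T x i) - ∑ i ∈ Finset.univ \ t, 2 * r * T x i := by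
    intro t x
    rw [hv_def]
    simp only [inner_sub_left, sum_inner, real_inner_smul_left,
      EuclideanSpace.inner_single_left, RCLike.star_def, starRingEnd_apply, star_one, one_mul]
  -- the dominating function
  set Q : EuclideanSpace ℝ (Fin k) → ℝ := fun x =>
    ∏ i, (Real.exp (2 * r * T x i) + Real.exp (-(2 * r * T x i))) with hQ_def
  set bound : EuclideanSpace ℝ (Fin k) → ℝ := fun x => r⁻¹ * (Q x * g x) with hbound_def
  have hQsum : ∀ x, Q x * g x
      = ∑ t ∈ (Finset.univ : Finset (Fin p)).powerset, Real.exp ⟪v t, T x⟫ * g x := by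
    intro x
    rw [hQ_def]
    simp only
    rw [Finset.prod_add, Finset.sum_mul]
    apply Finset.sum_congr rfl
    intro t _
    rw [hvinner, ← Real.exp_sum, ← Real.exp_sum, ← Real.exp_add]
    congr 2
    simp [sub_eq_add_neg]
  have hQg_int : Integrable (fun x => Q x * g x) := by
    have : (fun x => Q x * g x)
        = fun x => ∑ t ∈ (Finset.univ : Finset (Fin p)).powerset, Real.exp ⟪v t, T x⟫ * g x :=
      funext hQsum
    rw [this]
    exact integrable_finset_sum _ (fun t _ => hIv (v t) (hvnorm t))
  have hbound_int : Integrable bound := hQg_int.const_mul _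
  -- pointwise inequalities
  have hQx : ∀ x, Real.exp (2 * r * ‖T x‖) ≤ Q x := by
    intro x
    have h1 : 2 * r * ‖T x‖ ≤ ∑ i, 2 * r * |T x i| := by
      rw [← Finset.mul_sum]
      exact mul_le_mul_of_nonneg_left (euclid_norm_le_sum (T x)) (by positivity)
    calc Real.exp (2 * r * ‖T x‖) ≤ Real.exp (∑ i, 2 * r * |T x i|) := Real.exp_le_exp.mpr h1
      _ = ∏ i, Real.exp (2 * r * |T x i|) := Real.exp_sum _ _
      _ ≤ Q x := by
          apply Finset.prod_le_prod (fun i _ => (Real.exp_pos _).le)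
          intro i _
          rcases abs_cases (T x i) with ⟨hab, _⟩ | ⟨hab, _⟩
          · rw [hab]
            exact le_add_of_nonneg_right (Real.exp_pos _).le
          · rw [hab, mul_neg]
            exact le_add_of_nonneg_left (Real.exp_pos _).le
  have hkey : ∀ (θ : EuclideanSpace ℝ (Fin p)), dist θ θ₀ < r → ∀ x,
      Real.exp (-⟪θ - θ₀, T x⟫) * ‖T x‖ ≤ r⁻¹ * Q x := by
    intro θ hθ x
    have he1 : Real.exp (-⟪θ - θ₀, T x⟫) ≤ Real.exp (r * ‖T x‖) := by
      apply Real.exp_le_exp.mpr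
      calc -⟪θ - θ₀, T x⟫ ≤ |⟪θ - θ₀, T x⟫| := neg_le_abs _
        _ ≤ ‖θ - θ₀‖ * ‖T x‖ := abs_real_inner_le_norm _ _
        _ ≤ r * ‖T x‖ := by
            apply mul_le_mul_of_nonneg_right _ (norm_nonneg _)
            rw [← dist_eq_norm]; exact hθ.le
    have he2 : ‖T x‖ ≤ r⁻¹ * Real.exp (r * ‖T x‖) := by
      have h3 : r * ‖T x‖ ≤ Real.exp (r * ‖T x‖) := by
        have := Real.add_one_le_exp (r * ‖T x‖); linarith
      calc ‖T x‖ = r⁻¹ * (r * ‖T x‖) := by field_simp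
        _ ≤ r⁻¹ * Real.exp (r * ‖T x‖) := by
            exact mul_le_mul_of_nonneg_left h3 (by positivity)
    calc Real.exp (-⟪θ - θ₀, T x⟫) * ‖T x‖
        ≤ Real.exp (r * ‖T x‖) * (r⁻¹ * Real.exp (r * ‖T x‖)) := by
          apply mul_le_mul he1 he2 (norm_nonneg _) (Real.exp_pos _).le
      _ = r⁻¹ * Real.exp (2 * r * ‖T x‖) := by
          rw [mul_comm (Real.exp _), mul_assoc, ← Real.exp_add]
          congr 2; ring
      _ ≤ r⁻¹ * Q x := mul_le_mul_of_nonneg_left (hQx x) (by positivity)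
  -- derivative candidate
  set F' : EuclideanSpace ℝ (Fin p) → EuclideanSpace ℝ (Fin k) →
      (EuclideanSpace ℝ (Fin p) →L[ℝ] ℝ) := fun θ x =>
    innerSL ℝ ((Real.exp (-⟪θ - θ₀, T x⟫) * g x) • (-T x)) with hF'_def
  have hF'norm : ∀ θ x, ‖F' θ x‖ = Real.exp (-⟪θ - θ₀, T x⟫) * g x * ‖T x‖ := by
    intro θ x
    rw [hF'_def]
    simp only
    rw [innerSL_apply_norm, norm_smul, norm_neg]
    rw [Real.norm_eq_abs, abs_of_nonneg (mul_nonneg (Real.exp_pos _).le (hg0 x))]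
  have h_bound' : ∀ x, ∀ θ ∈ Metric.ball θ₀ r, ‖F' θ x‖ ≤ bound x := by
    intro x θ hθ
    rw [hF'norm]
    have h4 := hkey θ (by simpa [Metric.mem_ball] using hθ) x
    have h5 := mul_le_mul_of_nonneg_right h4 (hg0 x)
    have e1 : Real.exp (-⟪θ - θ₀, T x⟫) * g x * ‖T x‖
        = Real.exp (-⟪θ - θ₀, T x⟫) * ‖T x‖ * g x := by ring
    have e2 : bound x = r⁻¹ * Q x * g x := by rw [hbound_def]; ring
    rw [e1, e2]; exact h5
  have h_diff : ∀ x, ∀ θ ∈ Metric.ball θ₀ r,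
      HasFDerivAt (fun θ => Real.exp (-⟪θ - θ₀, T x⟫) * g x) (F' θ x) θ := by
    intro x θ _
    have hlin : HasFDerivAt (fun θ : EuclideanSpace ℝ (Fin p) => (⟪θ - θ₀, T x⟫ : ℝ))
        (innerSL ℝ (T x)) θ := by
      have heq : (fun θ : EuclideanSpace ℝ (Fin p) => (⟪θ - θ₀, T x⟫ : ℝ))
          = fun θ => innerSL ℝ (T x) θ - ⟪θ₀, T x⟫ := by
        funext θ'
        simp [inner_sub_left, real_inner_comm, mul_comm]
      rw [heq]
      exact ((innerSL ℝ (T x)).hasFDerivAt).sub_const _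
    have hmul := ((hlin.neg).exp).mul_const (g x)
    have hFeq : F' θ x = g x • (Real.exp (-⟪θ - θ₀, T x⟫) • -(innerSL ℝ (T x))) := by
      apply ContinuousLinearMap.ext
      intro w
      rw [hF'_def]
      simp only [innerSL_apply_apply, ContinuousLinearMap.smul_apply, ContinuousLinearMap.neg_apply,
        real_inner_smul_left, inner_neg_left, smul_eq_mul]
      ring
    rw [hFeq]
    exact hmul
  have hu_meas : Measurable (fun x => g x • (-T x)) := hg.smul hT.neg
  have hF'₀eq : F' θ₀ = fun x => innerSL ℝ (g x • -T x) := by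
    funext x
    rw [hF'_def]
    simp
  have hF'_meas : AEStronglyMeasurable (F' θ₀) volume := by
    rw [hF'₀eq]
    exact (innerSL ℝ).continuous.comp_aestronglyMeasurable hu_meas.aestronglyMeasurable
  have hF_int : Integrable (fun x => Real.exp (-⟪θ₀ - θ₀, T x⟫) * g x) :=
    hS θ₀ (by simpa [dist_self] using hε)
  have main := hasFDerivAt_integral_of_dominated_of_fderiv_le (Metric.ball_mem_nhds θ₀ hr)
    (Filter.Eventually.of_forall fun θ => (hmF θ).aestronglyMeasurable)
    hF_int hF'_meas (ae_of_all _ h_bound') hbound_int (ae_of_all _ h_diff)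
  -- integrability of g • T
  have hTn : ∀ x, g x * ‖T x‖ ≤ bound x := by
    intro x
    have h5 : Real.exp (-⟪θ₀ - θ₀, T x⟫) * ‖T x‖ ≤ r⁻¹ * Q x :=
      hkey θ₀ (by simpa [dist_self] using hr) x
    have h6 : ‖T x‖ ≤ r⁻¹ * Q x := by simpa using h5
    have h7 := mul_le_mul_of_nonneg_left h6 (hg0 x)
    have e : g x * (r⁻¹ * Q x) = r⁻¹ * (Q x * g x) := by ring
    rw [hbound_def]
    simp only
    linarith
  have hu0 : Integrable (fun x => g x • (-T x)) := by
    apply Integrable.mono hbound_int hu_meas.aestronglyMeasurable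
    apply ae_of_all
    intro x
    rw [norm_smul, norm_neg, Real.norm_eq_abs, abs_of_nonneg (hg0 x)]
    exact le_trans (hTn x) (le_abs_self _)
  have hgT : Integrable (fun x => g x • T x) := by
    have h8 := hu0.neg
    have h9 : (-fun x => g x • (-T x)) = fun x => g x • T x := by
      funext x; simp
    rwa [h9] at h8
  refine ⟨hgT, ?_⟩
  have hint : (∫ x, F' θ₀ x) = innerSL ℝ (-∫ x, g x • T x) := by
    rw [hF'₀eq]
    rw [ContinuousLinearMap.integral_comp_comm (innerSL ℝ) hu0]
    congr 1
    simp only [smul_neg]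
    rw [integral_neg]
  rw [← hint]
  exact main
/-- if `θ₀` lies in the interior of
`{θ : A(θ) < ∞ and ∫ φ²f²/f_θ < ∞}` and `A` has gradient `a = ∇A(θ₀)` at `θ₀`, then the
importance-sampling variance `V` is differentiable at `θ₀`, with gradient obtained by
differentiating under the integral:
`∇V(θ₀) = ∫ (∇A(θ₀) − T(x)) · (φ²(x)f²(x)/f_{θ₀}²(x)) · f_{θ₀}(x) dx`.
In particular, for a random variable `X` with density `f_{θ₀}`, the random vector
`g = (∇A(θ₀) − T(X)) φ²(X)f²(X)/f_{θ₀}²(X)` satisfies `E[g] = ∇V(θ₀)`. -/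
theorem importanceSamplingVariance_hasGradientAt {k p : ℕ}
    (T : EuclideanSpace ℝ (Fin k) → EuclideanSpace ℝ (Fin p)) (hT : Measurable T)
    (h : EuclideanSpace ℝ (Fin k) → ℝ) (hh : Measurable h) (hh0 : ∀ x, 0 ≤ h x)
    (Z : EuclideanSpace ℝ (Fin p) → ℝ≥0∞)
    (hZ : ∀ θ, Z θ = ∫⁻ x, ENNReal.ofReal (Real.exp ⟪θ, T x⟫ * h x))
    (A : EuclideanSpace ℝ (Fin p) → ℝ) (hA : ∀ θ, A θ = Real.log (Z θ).toReal)
    (fθ : EuclideanSpace ℝ (Fin p) → EuclideanSpace ℝ (Fin k) → ℝ)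
    (hfθ : ∀ θ x, fθ θ x = Real.exp (⟪θ, T x⟫ - A θ) * h x)
    (f φ : EuclideanSpace ℝ (Fin k) → ℝ) (hfm : Measurable f) (hφm : Measurable φ)
    (hf0 : ∀ x, 0 ≤ f x) (hf1 : ∫⁻ x, ENNReal.ofReal (f x) = 1)
    (I : ℝ) (hI : I = ∫ x, φ x * f x)
    (V : EuclideanSpace ℝ (Fin p) → ℝ)
    (hV : ∀ θ, V θ = (∫ x, (φ x) ^ 2 * (f x) ^ 2 / fθ θ x) - I ^ 2)
    (θ₀ a : EuclideanSpace ℝ (Fin p))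
    (hpos : ∀ x, φ x * f x ≠ 0 → 0 < fθ θ₀ x)
    (hθ₀ : θ₀ ∈ interior {θ | Z θ ≠ ⊤ ∧
      ∫⁻ x, ENNReal.ofReal ((φ x) ^ 2 * (f x) ^ 2 / fθ θ x) ≠ ⊤})
    (hAgrad : HasGradientAt A a θ₀)
    {Ω : Type*} [MeasurableSpace Ω] (P : Measure Ω) [IsProbabilityMeasure P]
    (X : Ω → EuclideanSpace ℝ (Fin k)) (hX : Measurable X)
    (hXd : P.map X = volume.withDensity (fun x => ENNReal.ofReal (fθ θ₀ x))) :
    HasGradientAt V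
      (∫ x, ((φ x) ^ 2 * (f x) ^ 2 / (fθ θ₀ x) ^ 2 * fθ θ₀ x) • (a - T x)) θ₀ ∧
    ∫ ω, ((φ (X ω)) ^ 2 * (f (X ω)) ^ 2 / (fθ θ₀ (X ω)) ^ 2) • (a - T (X ω)) ∂P
      = ∫ x, ((φ x) ^ 2 * (f x) ^ 2 / (fθ θ₀ x) ^ 2 * fθ θ₀ x) • (a - T x) := by
  classical
  -- basic measurability
  have hTi : ∀ v : EuclideanSpace ℝ (Fin p), Measurable (fun x => (⟪v, T x⟫ : ℝ)) :=
    fun v => ((innerSL ℝ v).continuous.measurable).comp hT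
  have hfθm : ∀ θ, Measurable (fθ θ) := by
    intro θ
    rw [show fθ θ = fun x => Real.exp (⟪θ, T x⟫ - A θ) * h x from funext (hfθ θ)]
    exact (Real.measurable_exp.comp ((hTi θ).sub_const _)).mul hh
  have hfθ0 : ∀ θ x, 0 ≤ fθ θ x := by
    intro θ x
    rw [hfθ]
    exact mul_nonneg (Real.exp_pos _).le (hh0 x)
  set g : EuclideanSpace ℝ (Fin k) → ℝ :=
    fun x => (φ x) ^ 2 * (f x) ^ 2 / fθ θ₀ x with hg_def
  have hg_meas : Measurable g := ((hφm.pow_const 2).mul (hfm.pow_const 2)).div (hfθm θ₀)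
  have hg0 : ∀ x, 0 ≤ g x := fun x =>
    div_nonneg (by positivity) (hfθ0 θ₀ x)
  -- the key pointwise identity
  have hid : ∀ θ x, (φ x) ^ 2 * (f x) ^ 2 / fθ θ x
      = Real.exp (A θ - A θ₀) * (Real.exp (-⟪θ - θ₀, T x⟫) * g x) := by
    intro θ x
    by_cases hx : h x = 0
    · rw [hg_def]
      simp only [hfθ, hx, mul_zero, div_zero]
    · have hexp : Real.exp (⟪θ₀, T x⟫ - A θ₀)
          = Real.exp (A θ - A θ₀) * Real.exp (-⟪θ - θ₀, T x⟫)
            * Real.exp (⟪θ, T x⟫ - A θ) := by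
        rw [← Real.exp_add, ← Real.exp_add]
        congr 1
        rw [inner_sub_left]
        ring
      rw [hg_def]
      simp only [hfθ]
      rw [hexp]
      field_simp
  -- the neighborhood of integrability
  rw [mem_interior_iff_mem_nhds, Metric.mem_nhds_iff] at hθ₀
  obtain ⟨ε, hε, hball⟩ := hθ₀
  have hIntS : ∀ θ : EuclideanSpace ℝ (Fin p), dist θ θ₀ < ε →
      Integrable (fun x => Real.exp (-⟪θ - θ₀, T x⟫) * g x) := by
    intro θ hθ
    obtain ⟨_, hfin⟩ := hball (by simpa [Metric.mem_ball] using hθ)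
    have hmθ : Measurable (fun x => Real.exp (-⟪θ - θ₀, T x⟫) * g x) :=
      (Real.measurable_exp.comp (hTi (θ - θ₀)).neg).mul hg_meas
    refine ⟨hmθ.aestronglyMeasurable, ?_⟩
    rw [hasFiniteIntegral_iff_ofReal
      (ae_of_all _ fun x => mul_nonneg (Real.exp_pos _).le (hg0 x))]
    have hrw : (fun x => ENNReal.ofReal ((φ x) ^ 2 * (f x) ^ 2 / fθ θ x))
        = fun x => ENNReal.ofReal (Real.exp (A θ - A θ₀))
            * ENNReal.ofReal (Real.exp (-⟪θ - θ₀, T x⟫) * g x) := by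
      funext x
      rw [hid θ x, ENNReal.ofReal_mul (Real.exp_pos _).le]
    rw [hrw] at hfin
    rw [lintegral_const_mul' _ _ ENNReal.ofReal_ne_top] at hfin
    have hc0 : ENNReal.ofReal (Real.exp (A θ - A θ₀)) ≠ 0 := by
      simp [ENNReal.ofReal_eq_zero, not_le, Real.exp_pos]
    rw [lt_top_iff_ne_top]
    intro htop
    rw [htop, ENNReal.mul_top hc0] at hfin
    exact hfin rfl
  -- apply the core differentiation lemma
  obtain ⟨hgT_int, hMderiv⟩ := tilt_hasFDerivAt hT hg_meas hg0 hε hIntS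
  have hg_int : Integrable g := by
    have := hIntS θ₀ (by simpa [dist_self] using hε)
    simpa using this
  -- M θ₀ = ∫ g
  have hM0 : (∫ x, Real.exp (-⟪θ₀ - θ₀, T x⟫) * g x) = ∫ x, g x := by
    simp
  -- rewrite V
  have hVeq : V = fun θ =>
      Real.exp (A θ - A θ₀) * (∫ x, Real.exp (-⟪θ - θ₀, T x⟫) * g x) - I ^ 2 := by
    funext θ
    rw [hV θ]
    congr 1
    calc (∫ x, (φ x) ^ 2 * (f x) ^ 2 / fθ θ x)
        = ∫ x, Real.exp (A θ - A θ₀) * (Real.exp (-⟪θ - θ₀, T x⟫) * g x) := by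
          exact integral_congr_ae (ae_of_all _ fun x => hid θ x)
      _ = Real.exp (A θ - A θ₀) * ∫ x, Real.exp (-⟪θ - θ₀, T x⟫) * g x :=
          integral_const_mul _ _
  -- derivative of the exponential prefactor
  have hA' : HasFDerivAt (fun θ => Real.exp (A θ - A θ₀))
      (InnerProductSpace.toDual ℝ _ a) θ₀ := by
    have h1 := ((hAgrad.hasFDerivAt).sub_const (A θ₀)).exp
    rw [sub_self, Real.exp_zero, one_smul] at h1
    exact h1
  -- product rule
  have hprod := (hA'.mul hMderiv).sub_const (I ^ 2)
  rw [sub_self, Real.exp_zero, one_smul, hM0] at hprod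
  simp only [Pi.mul_apply] at hprod
  rw [← hVeq] at hprod
  -- identify the gradient vector
  have hptw : ∀ x, (φ x) ^ 2 * (f x) ^ 2 / (fθ θ₀ x) ^ 2 * fθ θ₀ x = g x := by
    intro x
    by_cases hd : fθ θ₀ x = 0
    · rw [hg_def]
      simp [hd]
    · rw [hg_def]
      simp only
      rw [pow_two (fθ θ₀ x), ← div_div, div_mul_cancel₀ _ hd]
  have hGeq : (∫ x, ((φ x) ^ 2 * (f x) ^ 2 / (fθ θ₀ x) ^ 2 * fθ θ₀ x) • (a - T x))
      = (∫ x, g x) • a - ∫ x, g x • T x := by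
    have e : (fun x => ((φ x) ^ 2 * (f x) ^ 2 / (fθ θ₀ x) ^ 2 * fθ θ₀ x) • (a - T x))
        = fun x => g x • a - g x • T x := by
      funext x
      rw [hptw x, smul_sub]
    rw [e, integral_sub (hg_int.smul_const a) hgT_int, integral_smul_const]
  constructor
  · rw [hasGradientAt_iff_hasFDerivAt]
    refine HasFDerivAt.congr_fderiv hprod ?_
    apply ContinuousLinearMap.ext
    intro w
    simp only [hGeq, InnerProductSpace.toDual_apply_apply, ContinuousLinearMap.add_apply,
      ContinuousLinearMap.smul_apply, innerSL_apply_apply, inner_sub_left, inner_neg_left,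
      real_inner_smul_left, smul_eq_mul]
    ring
  · -- the expectation identity
    have hFm : Measurable (fun x => ((φ x) ^ 2 * (f x) ^ 2 / (fθ θ₀ x) ^ 2) • (a - T x)) := by
      apply Measurable.smul (f := fun x => (φ x) ^ 2 * (f x) ^ 2 / (fθ θ₀ x) ^ 2) (g := fun x => a - T x)
      · exact ((hφm.pow_const 2).mul (hfm.pow_const 2)).div ((hfθm θ₀).pow_const 2)
      · exact measurable_const.sub hT
    calc ∫ ω, ((φ (X ω)) ^ 2 * (f (X ω)) ^ 2 / (fθ θ₀ (X ω)) ^ 2) • (a - T (X ω)) ∂P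
        = ∫ x, ((φ x) ^ 2 * (f x) ^ 2 / (fθ θ₀ x) ^ 2) • (a - T x) ∂(P.map X) := by
          rw [integral_map hX.aemeasurable hFm.aestronglyMeasurable]
      _ = ∫ x, ((φ x) ^ 2 * (f x) ^ 2 / (fθ θ₀ x) ^ 2) • (a - T x)
            ∂(volume.withDensity (fun x => ENNReal.ofReal (fθ θ₀ x))) := by rw [hXd]
      _ = ∫ x, (fθ θ₀ x).toNNReal • (((φ x) ^ 2 * (f x) ^ 2 / (fθ θ₀ x) ^ 2) • (a - T x)) := by
          rw [show (fun x => ENNReal.ofReal (fθ θ₀ x))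
              = (fun x => ((fθ θ₀ x).toNNReal : ℝ≥0∞)) from rfl]
          exact integral_withDensity_eq_integral_smul (hfθm θ₀).real_toNNReal _
      _ = ∫ x, ((φ x) ^ 2 * (f x) ^ 2 / (fθ θ₀ x) ^ 2 * fθ θ₀ x) • (a - T x) := by
          have e2 : (fun x => (fθ θ₀ x).toNNReal
                • (((φ x) ^ 2 * (f x) ^ 2 / (fθ θ₀ x) ^ 2) • (a - T x)))
              = fun x => ((φ x) ^ 2 * (f x) ^ 2 / (fθ θ₀ x) ^ 2 * fθ θ₀ x) • (a - T x) := by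
            funext x
            rw [NNReal.smul_def, Real.coe_toNNReal _ (hfθ0 θ₀ x), smul_smul, mul_comm]
          rw [e2]
end

section
/- (Lower bound of Theorem 2) In the adaptive importance sampling setup, if the random parameters θ_i take values a.s. in a set Θ and V* = inf_{θ ∈ Θ} V(θ), then for every n ≥ 1 the variance of the unbiased estimator satisfies Var(Î_n) ≥ V*/n. -/
open MeasureTheory Real ProbabilityTheory
open scoped ENNReal RealInnerProductSpace

lemma aux_ofReal_div_mul (a c : ℝ) (hc : a ≠ 0 → 0 < c) :
    ENNReal.ofReal (a / c) * ENNReal.ofReal c = ENNReal.ofReal a := by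
  by_cases ha : a = 0
  · simp [ha]
  · have hc' := hc ha
    rcases le_or_gt 0 a with h0 | h0
    · rw [← ENNReal.ofReal_mul (div_nonneg h0 hc'.le), div_mul_cancel₀ _ hc'.ne']
    · have h1 : a / c < 0 := div_neg_of_neg_of_pos h0 hc'
      rw [ENNReal.ofReal_eq_zero.2 h1.le, ENNReal.ofReal_eq_zero.2 h0.le, zero_mul]

lemma aux_ofReal_div_sq_mul (a c : ℝ) (hc : a ≠ 0 → 0 < c) :
    ENNReal.ofReal ((a / c) ^ 2) * ENNReal.ofReal c = ENNReal.ofReal (a ^ 2 / c) := by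
  by_cases ha : a = 0
  · simp [ha]
  · have hc' := hc ha
    rw [← ENNReal.ofReal_mul (sq_nonneg _)]
    congr 1
    field_simp

lemma aux_integrable_mul {Ω : Type*} {m0 : MeasurableSpace Ω} {P : Measure Ω}
    {u v : Ω → ℝ} (hu : MemLp u 2 P) (hv : MemLp v 2 P) :
    Integrable (fun ω => u ω * v ω) P := by
  have h : (1 : ℝ≥0∞) / 1 = 1 / 2 + 1 / 2 := by
    rw [ENNReal.div_add_div_same, one_div_one, one_add_one_eq_two]
    exact (ENNReal.div_self (two_ne_zero) (ENNReal.ofNat_ne_top)).symm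
  haveI : ENNReal.HolderTriple 2 2 1 := ⟨by simp only [← one_div]; exact h.symm⟩
  have := hv.smul (r := 1) hu
  rw [memLp_one_iff_integrable] at this
  exact this

/-- lower bound of Theorem 2: if the random parameters `θ_i` take values
a.s. in `Θ` and `V* = inf_{θ ∈ Θ} V(θ)`, then `Var(Î_n) ≥ V*/n` for every `n ≥ 1`. -/
theorem adaptiveImportanceSampling_variance_lower_bound {k p : ℕ}
    (T : EuclideanSpace ℝ (Fin k) → EuclideanSpace ℝ (Fin p)) (hT : Measurable T)
    (h : EuclideanSpace ℝ (Fin k) → ℝ) (hh : Measurable h) (hh0 : ∀ x, 0 ≤ h x)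
    (Z : EuclideanSpace ℝ (Fin p) → ℝ≥0∞)
    (hZ : ∀ θ, Z θ = ∫⁻ x, ENNReal.ofReal (Real.exp ⟪θ, T x⟫ * h x))
    (A : EuclideanSpace ℝ (Fin p) → ℝ) (hA : ∀ θ, A θ = Real.log (Z θ).toReal)
    (fθ : EuclideanSpace ℝ (Fin p) → EuclideanSpace ℝ (Fin k) → ℝ)
    (hfθ : ∀ θ x, fθ θ x = Real.exp (⟪θ, T x⟫ - A θ) * h x)
    (f φ : EuclideanSpace ℝ (Fin k) → ℝ) (hfm : Measurable f) (hφm : Measurable φ)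
    (hf0 : ∀ x, 0 ≤ f x) (hf1 : ∫⁻ x, ENNReal.ofReal (f x) = 1)
    (hφf : Integrable (fun x => φ x * f x))
    (I : ℝ) (hI : I = ∫ x, φ x * f x)
    (V : EuclideanSpace ℝ (Fin p) → ℝ)
    (hV : ∀ θ, V θ = (∫ x, (φ x) ^ 2 * (f x) ^ 2 / fθ θ x) - I ^ 2)
    {Ω : Type*} {m0 : MeasurableSpace Ω} (P : Measure Ω) [IsProbabilityMeasure P]
    (𝓕 : Filtration ℕ m0)
    (θs : ℕ → Ω → EuclideanSpace ℝ (Fin p)) (X : ℕ → Ω → EuclideanSpace ℝ (Fin k))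
    (hθmeas : ∀ i, Measurable[𝓕 i] (θs i))
    (hXmeas : ∀ i, Measurable[𝓕 (i + 1)] (X i))
    (hZfin : ∀ i, ∀ᵐ ω ∂P, Z (θs i ω) ≠ ⊤)
    (hpos : ∀ i ω x, φ x * f x ≠ 0 → 0 < fθ (θs i ω) x)
    (hcond : ∀ i (g : EuclideanSpace ℝ (Fin p) → EuclideanSpace ℝ (Fin k) → ℝ≥0∞),
      Measurable (Function.uncurry g) →
      ∀ s : Set Ω, MeasurableSet[𝓕 i] s →
        ∫⁻ ω in s, g (θs i ω) (X i ω) ∂P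
          = ∫⁻ ω in s, (∫⁻ x, g (θs i ω) x * ENNReal.ofReal (fθ (θs i ω) x)) ∂P)
    (w : ℕ → Ω → ℝ)
    (hw : ∀ i ω, w i ω = φ (X i ω) * f (X i ω) / fθ (θs i ω) (X i ω))
    (hw2 : ∀ i, MemLp (w i) 2 P)
    (hVint : ∀ i, Integrable (fun ω => V (θs i ω)) P)
    (Θ : Set (EuclideanSpace ℝ (Fin p))) (hΘne : Θ.Nonempty)
    (hΘmem : ∀ i, ∀ᵐ ω ∂P, θs i ω ∈ Θ)
    (Vstar : ℝ) (hVstar : Vstar = sInf (V '' Θ))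
    (n : ℕ) (hn : 1 ≤ n) :
    Vstar / n ≤ variance (fun ω => (n : ℝ)⁻¹ * ∑ i ∈ Finset.range n, w i ω) P := by
  classical
  by_cases hbdd : BddBelow (V '' Θ)
  swap
  · rw [hVstar, Real.sInf_of_not_bddBelow hbdd, zero_div]
    exact variance_nonneg _ P
  have hn0 : (n : ℝ) ≠ 0 := by positivity
  -- measurability of A and fθ
  have hZm : Measurable Z := by
    have hm : Measurable (fun q : EuclideanSpace ℝ (Fin p) × EuclideanSpace ℝ (Fin k) =>
        ENNReal.ofReal (Real.exp ⟪q.1, T q.2⟫ * h q.2)) :=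
      ENNReal.measurable_ofReal.comp
        (((measurable_fst.inner (hT.comp measurable_snd)).exp).mul (hh.comp measurable_snd))
    have := Measurable.lintegral_prod_right' (ν := (volume : Measure (EuclideanSpace ℝ (Fin k)))) hm
    have hZeq : Z = fun θ => ∫⁻ x, ENNReal.ofReal (Real.exp ⟪θ, T x⟫ * h x) := funext hZ
    rw [hZeq]; exact this
  have hAmeas : Measurable A := by
    have hAeq : A = fun θ => Real.log (Z θ).toReal := funext hA
    rw [hAeq]
    exact Real.measurable_log.comp hZm.ennreal_toReal
  have hfθmeas : Measurable (Function.uncurry fθ) := by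
    have heq : Function.uncurry fθ = fun q : EuclideanSpace ℝ (Fin p) × EuclideanSpace ℝ (Fin k) =>
        Real.exp (⟪q.1, T q.2⟫ - A q.1) * h q.2 := funext fun q => hfθ q.1 q.2
    rw [heq]
    exact (((measurable_fst.inner (hT.comp measurable_snd)).sub
      (hAmeas.comp measurable_fst)).exp).mul (hh.comp measurable_snd)
  have hfθ0 : ∀ θ x, 0 ≤ fθ θ x := fun θ x => by
    rw [hfθ]; exact mul_nonneg (Real.exp_nonneg _) (hh0 x)
  -- integrability of w i
  have hwint : ∀ i, Integrable (w i) P := fun i => (hw2 i).integrable one_le_two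
  -- positive and negative part lintegrals of φ f
  set Jp : ℝ≥0∞ := ∫⁻ x, ENNReal.ofReal (φ x * f x) with hJp
  set Jm : ℝ≥0∞ := ∫⁻ x, ENNReal.ofReal (-(φ x * f x)) with hJm
  have hJpfin : Jp ≠ ⊤ := by
    refine ne_top_of_le_ne_top hφf.2.ne (lintegral_mono fun x => ?_)
    exact Real.ofReal_le_enorm _
  have hJmfin : Jm ≠ ⊤ := by
    refine ne_top_of_le_ne_top hφf.2.ne (lintegral_mono fun x => ?_)
    calc ENNReal.ofReal (-(φ x * f x)) ≤ ‖-(φ x * f x)‖₊ := Real.ofReal_le_enorm _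
    _ = ‖φ x * f x‖₊ := by rw [nnnorm_neg]
  have hIJ : I = Jp.toReal - Jm.toReal := by
    rw [hI, integral_eq_lintegral_pos_part_sub_lintegral_neg_part hφf]
  -- Fact A : set integrals of w i over 𝓕 i-measurable sets
  have hsetInt : ∀ i, ∀ s : Set Ω, MeasurableSet[𝓕 i] s →
      ∫ ω in s, w i ω ∂P = I * (P s).toReal := by
    intro i s hs
    have hsm : MeasurableSet s := 𝓕.le i s hs
    have hgpm : Measurable (Function.uncurry fun θ x =>
        ENNReal.ofReal (φ x * f x / fθ θ x)) := by
      apply ENNReal.measurable_ofReal.comp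
      exact ((hφm.comp measurable_snd).mul (hfm.comp measurable_snd)).div hfθmeas
    have hgmm : Measurable (Function.uncurry fun θ x =>
        ENNReal.ofReal (-(φ x * f x) / fθ θ x)) := by
      apply ENNReal.measurable_ofReal.comp
      exact (((hφm.comp measurable_snd).mul (hfm.comp measurable_snd)).neg).div hfθmeas
    have hp := hcond i (fun θ x => ENNReal.ofReal (φ x * f x / fθ θ x)) hgpm s hs
    have hm := hcond i (fun θ x => ENNReal.ofReal (-(φ x * f x) / fθ θ x)) hgmm s hs
    have hinnerp : ∀ ω, (∫⁻ x, ENNReal.ofReal (φ x * f x / fθ (θs i ω) x)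
        * ENNReal.ofReal (fθ (θs i ω) x)) = Jp := by
      intro ω
      refine lintegral_congr fun x => ?_
      exact aux_ofReal_div_mul _ _ (hpos i ω x)
    have hinnerm : ∀ ω, (∫⁻ x, ENNReal.ofReal (-(φ x * f x) / fθ (θs i ω) x)
        * ENNReal.ofReal (fθ (θs i ω) x)) = Jm := by
      intro ω
      refine lintegral_congr fun x => ?_
      refine (aux_ofReal_div_mul _ _ fun hne => hpos i ω x fun h0 => hne (by rw [h0, neg_zero]))
    simp only [hinnerp] at hp
    simp only [hinnerm] at hm
    rw [setLIntegral_const] at hp hm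
    have hwp : ∀ ω, ENNReal.ofReal (w i ω) = ENNReal.ofReal (φ (X i ω) * f (X i ω) / fθ (θs i ω) (X i ω)) := by
      intro ω; rw [hw]
    have hwm : ∀ ω, ENNReal.ofReal (-(w i ω)) = ENNReal.ofReal (-(φ (X i ω) * f (X i ω)) / fθ (θs i ω) (X i ω)) := by
      intro ω; rw [hw, neg_div]
    have hint : ∫ ω in s, w i ω ∂P
        = (∫⁻ ω in s, ENNReal.ofReal (w i ω) ∂P).toReal
          - (∫⁻ ω in s, ENNReal.ofReal (-(w i ω)) ∂P).toReal :=
      integral_eq_lintegral_pos_part_sub_lintegral_neg_part ((hwint i).restrict)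
    rw [hint]
    simp only [hwp, hwm]
    rw [hp, hm, ENNReal.toReal_mul, ENNReal.toReal_mul, hIJ]
    ring
  -- mean of w i
  have hmean : ∀ i, ∫ ω, w i ω ∂P = I := by
    intro i
    have := hsetInt i Set.univ MeasurableSet.univ
    rwa [setIntegral_univ, measure_univ, ENNReal.toReal_one, mul_one] at this
  -- Fact B : second moment of w j
  have hdiag : ∀ j, ∫ ω, w j ω ^ 2 ∂P = (∫ ω, V (θs j ω) ∂P) + I ^ 2 := by
    intro j
    set K : EuclideanSpace ℝ (Fin p) → ℝ≥0∞ :=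
      fun θ => ∫⁻ x, ENNReal.ofReal (φ x ^ 2 * f x ^ 2 / fθ θ x) with hK
    have hg2m : Measurable (Function.uncurry fun θ x =>
        ENNReal.ofReal ((φ x * f x / fθ θ x) ^ 2)) := by
      apply ENNReal.measurable_ofReal.comp
      exact (((hφm.comp measurable_snd).mul (hfm.comp measurable_snd)).div hfθmeas).pow_const 2
    have h2 := hcond j (fun θ x => ENNReal.ofReal ((φ x * f x / fθ θ x) ^ 2)) hg2m
      Set.univ MeasurableSet.univ
    rw [setLIntegral_univ, setLIntegral_univ] at h2
    have hinner : ∀ ω, (∫⁻ x, ENNReal.ofReal ((φ x * f x / fθ (θs j ω) x) ^ 2)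
        * ENNReal.ofReal (fθ (θs j ω) x)) = K (θs j ω) := by
      intro ω
      refine lintegral_congr fun x => ?_
      rw [aux_ofReal_div_sq_mul _ _ (hpos j ω x), mul_pow]
    simp only [hinner] at h2
    have hwsq : ∀ ω, ENNReal.ofReal (w j ω ^ 2)
        = ENNReal.ofReal ((φ (X j ω) * f (X j ω) / fθ (θs j ω) (X j ω)) ^ 2) := by
      intro ω; rw [hw]
    -- measurability of ω ↦ K (θs j ω)
    have hKm : Measurable (fun θ => K θ) := by
      have hm : Measurable (fun q : EuclideanSpace ℝ (Fin p) × EuclideanSpace ℝ (Fin k) =>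
          ENNReal.ofReal (φ q.2 ^ 2 * f q.2 ^ 2 / fθ q.1 q.2)) := by
        apply ENNReal.measurable_ofReal.comp
        exact (((hφm.comp measurable_snd).pow_const 2).mul
          ((hfm.comp measurable_snd).pow_const 2)).div hfθmeas
      exact Measurable.lintegral_prod_right'
        (ν := (volume : Measure (EuclideanSpace ℝ (Fin k)))) hm
    have hKθm : Measurable (fun ω => K (θs j ω)) :=
      hKm.comp ((hθmeas j).mono (𝓕.le j) le_rfl)
    -- integrability of w j ^ 2
    have hsqint : Integrable (fun ω => w j ω ^ 2) P :=
      (memLp_two_iff_integrable_sq (hw2 j).1).mp (hw2 j)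
    have hfin : (∫⁻ ω, ENNReal.ofReal (w j ω ^ 2) ∂P) ≠ ⊤ := by
      refine ne_top_of_le_ne_top hsqint.2.ne (lintegral_mono fun ω => ?_)
      exact Real.ofReal_le_enorm _
    have hKfin : ∀ᵐ ω ∂P, K (θs j ω) < ⊤ := by
      refine ae_lt_top hKθm ?_
      rw [← h2]
      · simp only [hwsq] at hfin ⊢
        exact hfin
    -- ∫ x, φ²f²/fθ θ = (K θ).toReal for every θ
    have hVK : ∀ θ, (∫ x, φ x ^ 2 * f x ^ 2 / fθ θ x) = (K θ).toReal := by
      intro θ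
      rw [integral_eq_lintegral_of_nonneg_ae]
      · exact Filter.Eventually.of_forall fun x =>
          div_nonneg (mul_nonneg (sq_nonneg _) (sq_nonneg _)) (hfθ0 θ x)
      · refine Measurable.aestronglyMeasurable ?_
        exact ((hφm.pow_const 2).mul (hfm.pow_const 2)).div
          (hfθmeas.comp (measurable_const.prodMk measurable_id))
    have step1 : ∫ ω, w j ω ^ 2 ∂P = (∫⁻ ω, ENNReal.ofReal (w j ω ^ 2) ∂P).toReal := by
      rw [integral_eq_lintegral_of_nonneg_ae
        (Filter.Eventually.of_forall fun ω => sq_nonneg _) (hsqint.1)]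
    have step2 : (∫⁻ ω, ENNReal.ofReal (w j ω ^ 2) ∂P).toReal
        = (∫⁻ ω, K (θs j ω) ∂P).toReal := by
      simp only [hwsq]; rw [h2]
    have step3 : (∫⁻ ω, K (θs j ω) ∂P).toReal = ∫ ω, (K (θs j ω)).toReal ∂P :=
      (integral_toReal hKθm.aemeasurable hKfin).symm
    have step4 : ∫ ω, (K (θs j ω)).toReal ∂P = ∫ ω, (V (θs j ω) + I ^ 2) ∂P := by
      refine integral_congr_ae (Filter.Eventually.of_forall fun ω => ?_)
      show (K (θs j ω)).toReal = V (θs j ω) + I ^ 2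
      rw [← hVK, hV]; ring
    rw [step1, step2, step3, step4,
      integral_add (hVint j) (integrable_const _), integral_const, probReal_univ, one_smul]
  -- conditional expectation of w j given 𝓕 j is I
  haveI : ∀ j : ℕ, SigmaFinite (P.trim (𝓕.le j)) := fun j => by
    have : IsFiniteMeasure (P.trim (𝓕.le j)) := isFiniteMeasure_trim (𝓕.le j)
    infer_instance
  have hce : ∀ j : ℕ, (fun _ : Ω => I) =ᵐ[P] P[w j | 𝓕 j] := by
    intro j
    refine ae_eq_condExp_of_forall_setIntegral_eq (𝓕.le j) (hwint j)
      (fun s _ _ => (integrable_const I).integrableOn) (fun s hs _ => ?_) ?_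
    · rw [hsetInt j s hs, setIntegral_const, smul_eq_mul, mul_comm]; rfl
    · exact (stronglyMeasurable_const :
        StronglyMeasurable[𝓕 j] fun _ : Ω => I).aestronglyMeasurable
  -- w i is 𝓕 j strongly measurable for i < j
  have hwsm : ∀ i j : ℕ, i < j → StronglyMeasurable[𝓕 j] (w i) := by
    intro i j hij
    have hm : Measurable[𝓕 (i + 1)] (w i) := by
      have heq : w i = fun ω => φ (X i ω) * f (X i ω)
          / Function.uncurry fθ (θs i ω, X i ω) := funext fun ω => hw i ω
      rw [heq]
      exact ((hφm.comp (hXmeas i)).mul (hfm.comp (hXmeas i))).div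
        (hfθmeas.comp (((hθmeas i).mono (𝓕.mono (Nat.le_succ i)) le_rfl).prodMk (hXmeas i)))
    exact (hm.mono (𝓕.mono hij) le_rfl).stronglyMeasurable
  -- cross terms
  have hcross : ∀ i j : ℕ, i < j → ∫ ω, w i ω * w j ω ∂P = I ^ 2 := by
    intro i j hij
    have hmul_int : Integrable (w i * w j) P := aux_integrable_mul (hw2 i) (hw2 j)
    have hfun : (fun ω => w i ω * w j ω) = w i * w j := rfl
    rw [show (∫ ω, w i ω * w j ω ∂P) = ∫ ω, (w i * w j) ω ∂P from rfl,
      ← integral_condExp (𝓕.le j) (f := w i * w j)]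
    have h2 : P[w i * w j | 𝓕 j] =ᵐ[P] w i * P[w j | 𝓕 j] :=
      condExp_mul_of_stronglyMeasurable_left (hwsm i j hij) hmul_int (hwint j)
    have h3 : w i * P[w j | 𝓕 j] =ᵐ[P] fun ω => w i ω * I := by
      filter_upwards [hce j] with ω hω
      show w i ω * (P[w j | 𝓕 j]) ω = w i ω * I
      rw [← hω]
    rw [integral_congr_ae (h2.trans h3)]
    rw [integral_mul_const, hmean i]
    ring
  -- product formula
  have hprod : ∀ i j : ℕ, ∫ ω, w i ω * w j ω ∂P
      = (if i = j then ∫ ω, V (θs i ω) ∂P else 0) + I ^ 2 := by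
    intro i j
    rcases lt_trichotomy i j with hij | rfl | hij
    · rw [hcross i j hij, if_neg hij.ne, zero_add]
    · have hsq : ∫ ω, w i ω * w i ω ∂P = ∫ ω, w i ω ^ 2 ∂P :=
        integral_congr_ae (Filter.Eventually.of_forall fun ω => by ring)
      rw [if_pos rfl, hsq, hdiag i]
    · have : ∫ ω, w i ω * w j ω ∂P = ∫ ω, w j ω * w i ω ∂P := by
        refine integral_congr_ae (Filter.Eventually.of_forall fun ω => ?_)
        ring
      rw [this, hcross j i hij, if_neg hij.ne', zero_add]
  -- the estimator
  set S : Ω → ℝ := fun ω => (n : ℝ)⁻¹ * ∑ i ∈ Finset.range n, w i ω with hS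
  have hS2 : MemLp S 2 P := by
    have hsum : MemLp (fun ω => ∑ i ∈ Finset.range n, w i ω) 2 P :=
      memLp_finset_sum (Finset.range n) (fun i _ => hw2 i)
    exact hsum.const_mul _
  have hvar : variance S P = (∫ ω, S ω ^ 2 ∂P) - (∫ ω, S ω ∂P) ^ 2 := by
    have := variance_eq_sub hS2
    rw [this]
    rfl
  have hmeanS : ∫ ω, S ω ∂P = I := by
    rw [hS]
    rw [integral_const_mul, integral_finset_sum _ (fun i _ => hwint i)]
    simp only [hmean]
    rw [Finset.sum_const, Finset.card_range, nsmul_eq_mul]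
    field_simp
  have hSsq : ∫ ω, S ω ^ 2 ∂P
      = ((n : ℝ)⁻¹) ^ 2 * ((∑ i ∈ Finset.range n, ∫ ω, V (θs i ω) ∂P)
          + (n : ℝ) ^ 2 * I ^ 2) := by
    have expand : ∀ ω, S ω ^ 2 = ((n : ℝ)⁻¹) ^ 2 *
        ∑ i ∈ Finset.range n, ∑ j ∈ Finset.range n, w i ω * w j ω := by
      intro ω
      have hsq : (∑ i ∈ Finset.range n, w i ω) ^ 2
          = ∑ i ∈ Finset.range n, ∑ j ∈ Finset.range n, w i ω * w j ω := by
        rw [sq, Finset.sum_mul_sum]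
      rw [hS, mul_pow, hsq]
    simp only [expand]
    rw [integral_const_mul]
    congr 1
    rw [integral_finset_sum _ (fun i _ =>
      integrable_finset_sum _ (fun j _ => aux_integrable_mul (hw2 i) (hw2 j)))]
    have hrow : ∀ i ∈ Finset.range n, (∑ j ∈ Finset.range n, ∫ ω, w i ω * w j ω ∂P)
        = (∫ ω, V (θs i ω) ∂P) + (n : ℝ) * I ^ 2 := by
      intro i hi
      have : ∀ j ∈ Finset.range n, ∫ ω, w i ω * w j ω ∂P
          = (if i = j then ∫ ω, V (θs i ω) ∂P else 0) + I ^ 2 := fun j _ => hprod i j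
      rw [Finset.sum_congr rfl this, Finset.sum_add_distrib,
        Finset.sum_ite_eq (Finset.range n) i, if_pos hi,
        Finset.sum_const, Finset.card_range, nsmul_eq_mul]
    have hstep : ∀ i ∈ Finset.range n, (∫ ω, ∑ j ∈ Finset.range n, w i ω * w j ω ∂P)
        = (∫ ω, V (θs i ω) ∂P) + (n : ℝ) * I ^ 2 := by
      intro i hi
      rw [integral_finset_sum _ (fun j _ => aux_integrable_mul (hw2 i) (hw2 j))]
      exact hrow i hi
    rw [Finset.sum_congr rfl hstep, Finset.sum_add_distrib,
      Finset.sum_const, Finset.card_range, nsmul_eq_mul]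
    ring
  -- lower bound on each E[V(θ_i)]
  have hVlow : ∀ i, Vstar ≤ ∫ ω, V (θs i ω) ∂P := by
    intro i
    have hle : ∀ᵐ ω ∂P, Vstar ≤ V (θs i ω) := by
      filter_upwards [hΘmem i] with ω hω
      rw [hVstar]
      exact csInf_le hbdd ⟨_, hω, rfl⟩
    calc Vstar = ∫ _ω, Vstar ∂P := by simp
    _ ≤ ∫ ω, V (θs i ω) ∂P := integral_mono_ae (integrable_const _) (hVint i) hle
  have hsumlow : (n : ℝ) * Vstar ≤ ∑ i ∈ Finset.range n, ∫ ω, V (θs i ω) ∂P := by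
    calc (n : ℝ) * Vstar = ∑ _i ∈ Finset.range n, Vstar := by
          rw [Finset.sum_const, Finset.card_range, nsmul_eq_mul]
    _ ≤ _ := Finset.sum_le_sum fun i _ => hVlow i
  rw [hvar, hSsq, hmeanS]
  have hfinal : ((n : ℝ)⁻¹) ^ 2 * ((∑ i ∈ Finset.range n, ∫ ω, V (θs i ω) ∂P)
        + (n : ℝ) ^ 2 * I ^ 2) - I ^ 2
      = ((n : ℝ)⁻¹) ^ 2 * (∑ i ∈ Finset.range n, ∫ ω, V (θs i ω) ∂P) := by
    field_simp
    ring
  rw [hfinal]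
  calc Vstar / n = ((n : ℝ)⁻¹) ^ 2 * ((n : ℝ) * Vstar) := by
        field_simp
  _ ≤ _ := mul_le_mul_of_nonneg_left hsumlow (by positivity)
end

section
/- (Stochastic gradient descent regret bound) Let Θ ⊆ ℝ^p be nonempty, convex and compact with diameter D = max_{θ₁,θ₂∈Θ} ‖θ₁ − θ₂‖, projection Π, and let V : ℝ^p → ℝ be convex and differentiable on a neighborhood of Θ with minimizer θ* of V over Θ and V* = V(θ*). Suppose (θ_i)_{i≥1} is generated by θ_{i+1} = Π(θ_i − (C/√i) g_i) with C > 0, θ₁ ∈ Θ, where g_i satisfies E[g_i | F_{i−1}] = ∇V(θ_i) and E[‖g_i‖² | F_{i−1}] ≤ G² with θ_i F_{i−1}-measurable. Then for every n ≥ 1: (1/n²) Σ_{i=1}^n E[V(θ_i)] ≤ V*/n + (D²/(2C) + C G²) n^{−3/2}. -/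
open MeasureTheory Real
open scoped ENNReal RealInnerProductSpace

section Aux

variable {α : Type*} {m m0 : MeasurableSpace α} {μ : Measure α}

/-- Conditional expectation commutes with continuous linear maps. -/
lemma sgd_condexp_clm {E F : Type*} [NormedAddCommGroup E] [NormedSpace ℝ E] [CompleteSpace E]
    [NormedAddCommGroup F] [NormedSpace ℝ F] [CompleteSpace F]
    (hm : m ≤ m0) [SigmaFinite (μ.trim hm)] (L : E →L[ℝ] F) {f : α → E}
    (hf : Integrable f μ) :
    (fun ω => L ((μ[f|m]) ω)) =ᵐ[μ] μ[fun ω => L (f ω)|m] := by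
  refine ae_eq_condExp_of_forall_setIntegral_eq hm (L.integrable_comp hf) ?_ ?_ ?_
  · exact fun s _ _ => (L.integrable_comp integrable_condExp).integrableOn
  · intro s hs hμs
    rw [ContinuousLinearMap.integral_comp_comm L integrable_condExp.integrableOn,
      ContinuousLinearMap.integral_comp_comm L hf.integrableOn,
      setIntegral_condExp hm hf hs]
  · exact StronglyMeasurable.aestronglyMeasurable
      (L.continuous.comp_stronglyMeasurable stronglyMeasurable_condExp)

/-- Gradient inequality for convex functions. -/
lemma sgd_convex_grad {E : Type*} [NormedAddCommGroup E] [InnerProductSpace ℝ E]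
    [CompleteSpace E] {V : E → ℝ} (hV : ConvexOn ℝ Set.univ V)
    {x gx : E} (h : HasGradientAt V gx x) (y : E) :
    V x + ⟪gx, y - x⟫ ≤ V y := by
  set c : ℝ → E := fun t => x + t • (y - x) with hc
  have hφconv : ConvexOn ℝ Set.univ (V ∘ c) := by
    have := hV.comp_affineMap (AffineMap.lineMap x y : ℝ →ᵃ[ℝ] E)
    simp only [Set.preimage_univ] at this
    refine this.congr fun t _ => ?_
    simp only [Function.comp_apply, AffineMap.lineMap_apply_module, c]
    congr 1
    module
  have hderiv : HasDerivAt (V ∘ c) (⟪gx, y - x⟫) 0 := by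
    have hc' : HasDerivAt c (y - x) 0 := by
      simpa [c] using ((hasDerivAt_id (0:ℝ)).smul_const (y - x)).const_add x
    have hfd : HasFDerivAt V ((InnerProductSpace.toDual ℝ E) gx) (c 0) := by
      simpa [c] using h.hasFDerivAt
    have := hfd.comp_hasDerivAt 0 hc'
    simpa [InnerProductSpace.toDual_apply_apply] using this
  have := hφconv.le_slope_of_hasDerivAt (Set.mem_univ 0) (Set.mem_univ 1) one_pos hderiv
  have h01 : slope (V ∘ c) 0 1 = V y - V x := by
    simp [slope, c]
  rw [h01] at this
  linarith

/-- Projection onto a convex set doesn't increase distance to points of the set. -/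
lemma sgd_proj_le {E : Type*} [NormedAddCommGroup E] [InnerProductSpace ℝ E]
    {K : Set E} (hK : Convex ℝ K) {u q z : E} (hq : q ∈ K) (hz : z ∈ K)
    (hmin : ∀ v ∈ K, dist q u ≤ dist v u) : ‖q - z‖ ≤ ‖u - z‖ := by
  haveI : Nonempty K := ⟨⟨q, hq⟩⟩
  have hiInf : ‖u - q‖ = ⨅ w : K, ‖u - w‖ := by
    refine le_antisymm (le_ciInf fun w => ?_) (ciInf_le (f := fun w : K => ‖u - w‖) ⟨0, by rintro r ⟨w, rfl⟩; positivity⟩ ⟨q, hq⟩)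
    have := hmin w w.2
    rw [dist_eq_norm, dist_eq_norm] at this
    rwa [norm_sub_rev u q, norm_sub_rev u (w : E)]
  have key := (norm_eq_iInf_iff_real_inner_le_zero hK hq).1 hiInf z hz
  have h1 : ⟪q - z, q - z⟫ = ⟪q - u, q - z⟫ + ⟪u - z, q - z⟫ := by
    rw [← inner_add_left, show q - u + (u - z) = q - z by abel]
  have h2 : ⟪q - u, q - z⟫ ≤ 0 := by
    calc ⟪q - u, q - z⟫ = ⟪u - q, z - q⟫ := by
          rw [show q - u = -(u - q) by abel, show q - z = -(z - q) by abel, inner_neg_neg]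
      _ ≤ 0 := key
  have h3 : ⟪u - z, q - z⟫ ≤ ‖u - z‖ * ‖q - z‖ := real_inner_le_norm _ _
  have h4 : ‖q - z‖ ^ 2 ≤ ‖u - z‖ * ‖q - z‖ := by
    rw [← real_inner_self_eq_norm_sq]; linarith
  nlinarith [norm_nonneg (q - z), norm_nonneg (u - z)]

/-- A coordinate of a Euclidean vector is bounded by the norm. -/
lemma sgd_coord_le {p : ℕ} (x : EuclideanSpace ℝ (Fin p)) (j : Fin p) : |x j| ≤ ‖x‖ := by
  rw [EuclideanSpace.norm_eq, show |x j| = Real.sqrt ((x j) ^ 2) by rw [Real.sqrt_sq_eq_abs]]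
  apply Real.sqrt_le_sqrt
  have := Finset.single_le_sum (f := fun i => ‖x i‖ ^ 2) (fun i _ => by positivity)
    (Finset.mem_univ j)
  simpa [Real.norm_eq_abs, sq_abs] using this

end Aux

/-- stochastic gradient descent regret bound: for projected SGD iterates
`θ_{i+1} = Π(θ_i − (C/√i) g_i)` on a nonempty convex compact set `Θ` of diameter `D`, with
`V` convex and differentiable on a neighborhood of `Θ`, minimizer `θ*` of `V` over `Θ`,
unbiased stochastic gradients `E[g_i | F_{i−1}] = ∇V(θ_i)` and second moments bounded by
`G²`, one has `(1/n²) ∑_{i=1}^n E[V(θ_i)] ≤ V*/n + (D²/(2C) + C G²) n^{−3/2}`. -/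
theorem projected_sgd_regret_bound {p : ℕ}
    {Ω : Type*} {m0 : MeasurableSpace Ω} (P : Measure Ω) [IsProbabilityMeasure P]
    (𝓕 : Filtration ℕ m0)
    (Θ : Set (EuclideanSpace ℝ (Fin p))) (hΘne : Θ.Nonempty) (hΘconv : Convex ℝ Θ)
    (hΘcomp : IsCompact Θ)
    (D : ℝ) (hD : D = Metric.diam Θ)
    (proj : EuclideanSpace ℝ (Fin p) → EuclideanSpace ℝ (Fin p))
    (hproj : ∀ u, proj u ∈ Θ ∧ ∀ v ∈ Θ, dist (proj u) u ≤ dist v u)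
    (U : Set (EuclideanSpace ℝ (Fin p))) (hU : IsOpen U) (hΘU : Θ ⊆ U)
    (V : EuclideanSpace ℝ (Fin p) → ℝ) (hVconv : ConvexOn ℝ Set.univ V)
    (gradV : EuclideanSpace ℝ (Fin p) → EuclideanSpace ℝ (Fin p))
    (hgradV : ∀ θ ∈ U, HasGradientAt V (gradV θ) θ)
    (θstar : EuclideanSpace ℝ (Fin p)) (hθstar : θstar ∈ Θ)
    (hmin : ∀ θ ∈ Θ, V θstar ≤ V θ)
    (C : ℝ) (hC : 0 < C) (G : ℝ)
    (θ g : ℕ → Ω → EuclideanSpace ℝ (Fin p))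
    (hθmeas : ∀ i, 1 ≤ i → Measurable[𝓕 (i - 1)] (θ i))
    (hθΘ : ∀ i, 1 ≤ i → ∀ ω, θ i ω ∈ Θ)
    (hgl2 : ∀ i, MemLp (g i) 2 P)
    (hgcond : ∀ i, 1 ≤ i → P[g i|𝓕 (i - 1)] =ᵐ[P] fun ω => gradV (θ i ω))
    (hgG : ∀ i, 1 ≤ i → P[fun ω => ‖g i ω‖ ^ 2|𝓕 (i - 1)] ≤ᵐ[P] fun _ => G ^ 2)
    (hrec : ∀ i, 1 ≤ i → ∀ ω, θ (i + 1) ω = proj (θ i ω - (C / Real.sqrt i) • g i ω))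
    (n : ℕ) (hn : 1 ≤ n) :
    (1 / (n : ℝ) ^ 2) * ∑ i ∈ Finset.Icc 1 n, ∫ ω, V (θ i ω) ∂P
      ≤ V θstar / n + (D ^ 2 / (2 * C) + C * G ^ 2) / (n : ℝ) ^ ((3 : ℝ) / 2) := by
  classical
  have hD0 : 0 ≤ D := hD ▸ Metric.diam_nonneg
  have hθm0 : ∀ i, 1 ≤ i → Measurable (θ i) := fun i hi => (hθmeas i hi).mono (𝓕.le _) le_rfl
  have hnormD : ∀ i, 1 ≤ i → ∀ ω, ‖θ i ω - θstar‖ ≤ D := by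
    intro i hi ω
    rw [← dist_eq_norm, hD]
    exact Metric.dist_le_diam_of_mem hΘcomp.isBounded (hθΘ i hi ω) hθstar
  set b : ℕ → ℝ := fun i => ∫ ω, V (θ i ω) ∂P with hb
  set a : ℕ → ℝ := fun i => ∫ ω, ‖θ i ω - θstar‖ ^ 2 ∂P with ha
  have hXint : ∀ i, 1 ≤ i → Integrable (fun ω => ‖θ i ω - θstar‖ ^ 2) P := by
    intro i hi
    refine ⟨(((hθm0 i hi).sub measurable_const).norm.pow_const 2).aestronglyMeasurable,
      HasFiniteIntegral.of_bounded (C := D ^ 2) (ae_of_all _ fun ω => ?_)⟩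
    rw [Real.norm_eq_abs, abs_of_nonneg (by positivity)]
    exact pow_le_pow_left₀ (norm_nonneg _) (hnormD i hi ω) 2
  have ha0 : ∀ i, 0 ≤ a i := fun i => integral_nonneg fun ω => by positivity
  have haD : ∀ i, 1 ≤ i → a i ≤ D ^ 2 := by
    intro i hi
    simp only [ha]
    calc ∫ ω, ‖θ i ω - θstar‖ ^ 2 ∂P ≤ ∫ _ω, D ^ 2 ∂P :=
          integral_mono (hXint i hi) (integrable_const _)
            (fun ω => pow_le_pow_left₀ (norm_nonneg _) (hnormD i hi ω) 2)
      _ = D ^ 2 := by simp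
  -- continuity / integrability of V ∘ θ i
  have hVU : ContinuousOn V U := fun x hx =>
    ((hgradV x hx).differentiableAt.continuousAt).continuousWithinAt
  have hVres : Continuous (U.restrict V) := continuousOn_iff_continuous_restrict.mp hVU
  have hVθmeas : ∀ i, 1 ≤ i → Measurable (fun ω => V (θ i ω)) := by
    intro i hi
    have h1 : Measurable fun ω => (⟨θ i ω, hΘU (hθΘ i hi ω)⟩ : U) := (hθm0 i hi).subtype_mk
    exact hVres.measurable.comp h1
  obtain ⟨MV, hMV⟩ := hΘcomp.exists_bound_of_continuousOn (hVU.mono hΘU)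
  have hVint : ∀ i, 1 ≤ i → Integrable (fun ω => V (θ i ω)) P := by
    intro i hi
    exact ⟨(hVθmeas i hi).aestronglyMeasurable,
      HasFiniteIntegral.of_bounded (C := MV) (ae_of_all _ fun ω => hMV _ (hθΘ i hi ω))⟩
  -- g facts
  have hgint : ∀ i, Integrable (g i) P := fun i => (hgl2 i).integrable one_le_two
  have hg2int : ∀ i, Integrable (fun ω => ‖g i ω‖ ^ 2) P := fun i => (hgl2 i).norm.integrable_sq
  have hJ : ∀ i, 1 ≤ i → ∫ ω, ‖g i ω‖ ^ 2 ∂P ≤ G ^ 2 := by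
    intro i hi
    calc ∫ ω, ‖g i ω‖ ^ 2 ∂P = ∫ ω, (P[fun ω => ‖g i ω‖ ^ 2|𝓕 (i - 1)]) ω ∂P :=
          (integral_condExp (𝓕.le (i - 1))).symm
      _ ≤ ∫ _ω, G ^ 2 ∂P :=
          integral_mono_ae integrable_condExp (integrable_const _) (hgG i hi)
      _ = G ^ 2 := by simp
  -- the inner-product integral inequality
  have hIlow : ∀ i, 1 ≤ i → b i - V θstar ≤ ∫ ω, ⟪θ i ω - θstar, g i ω⟫ ∂P := by
    intro i hi
    have hm : 𝓕 (i - 1) ≤ m0 := 𝓕.le _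
    set fj : Fin p → Ω → ℝ := fun j ω => (θ i ω - θstar) j with hfj
    set gj : Fin p → Ω → ℝ := fun j ω => g i ω j with hgj
    have hfj_sm : ∀ j, StronglyMeasurable[𝓕 (i - 1)] (fj j) := by
      intro j
      have h1 : Measurable[𝓕 (i - 1)] fun ω => (θ i ω) j :=
        ((EuclideanSpace.proj (𝕜 := ℝ) j).continuous.measurable).comp (hθmeas i hi)
      have h2 : Measurable[𝓕 (i - 1)] (fj j) := by
        simpa [fj, PiLp.sub_apply] using h1.sub_const (θstar j)
      exact h2.stronglyMeasurable
    have hfj_bdd : ∀ j ω, |fj j ω| ≤ D := fun j ω => (sgd_coord_le _ j).trans (hnormD i hi ω)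
    have hgj_int : ∀ j, Integrable (gj j) P := by
      intro j
      have := (EuclideanSpace.proj (𝕜 := ℝ) j).integrable_comp (hgint i)
      simpa [gj] using this
    have hfj_bdd' : ∀ j, ∃ c, ∀ ω, ‖fj j ω‖ ≤ c := fun j =>
      ⟨D, fun ω => by simpa [Real.norm_eq_abs] using hfj_bdd j ω⟩
    have hfgj_int : ∀ j, Integrable (fj j * gj j) P := fun j =>
      (hgj_int j).bdd_mul ((hfj_sm j).mono hm).aestronglyMeasurable (ae_of_all _ (hfj_bdd' j).choose_spec)
    have hcj : ∀ j, (P[gj j|𝓕 (i - 1)]) =ᵐ[P] fun ω => gradV (θ i ω) j := by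
      intro j
      have h1 := (sgd_condexp_clm (μ := P) hm (EuclideanSpace.proj (𝕜 := ℝ) j) (hgint i)).symm
      have h1' : (P[gj j|𝓕 (i - 1)]) =ᵐ[P] fun ω => ((P[g i|𝓕 (i - 1)]) ω) j := by
        simpa [gj] using h1
      have h3 : (fun ω => ((P[g i|𝓕 (i - 1)]) ω) j) =ᵐ[P] fun ω => gradV (θ i ω) j :=
        (hgcond i hi).mono fun ω hω => by
          show ((P[g i|𝓕 (i - 1)]) ω) j = gradV (θ i ω) j
          rw [hω]
      exact h1'.trans h3
    have hpull : ∀ j, P[fj j * gj j|𝓕 (i - 1)] =ᵐ[P] fj j * P[gj j|𝓕 (i - 1)] := fun j =>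
      condExp_mul_of_stronglyMeasurable_left (hfj_sm j) (hfgj_int j) (hgj_int j)
    have hint_cond : ∀ j, Integrable (fj j * P[gj j|𝓕 (i - 1)]) P := fun j =>
      integrable_condExp.bdd_mul ((hfj_sm j).mono hm).aestronglyMeasurable (ae_of_all _ (hfj_bdd' j).choose_spec)
    have hIj : ∀ j, ∫ ω, (fj j * P[gj j|𝓕 (i - 1)]) ω ∂P = ∫ ω, (fj j * gj j) ω ∂P := by
      intro j
      calc ∫ ω, (fj j * P[gj j|𝓕 (i - 1)]) ω ∂P
          = ∫ ω, (P[fj j * gj j|𝓕 (i - 1)]) ω ∂P := (integral_congr_ae (hpull j)).symm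
        _ = ∫ ω, (fj j * gj j) ω ∂P := integral_condExp hm
    have hinner_eq : ∀ (ω : Ω) (v : EuclideanSpace ℝ (Fin p)),
        ⟪θ i ω - θstar, v⟫ = ∑ j, fj j ω * v j := by
      intro ω v
      rw [PiLp.inner_apply]
      simp [fj, RCLike.inner_apply, conj_trivial, mul_comm]
    have hsum_int : Integrable (fun ω => ∑ j, (fj j * P[gj j|𝓕 (i - 1)]) ω) P :=
      integrable_finset_sum _ fun j _ => hint_cond j
    have hae : ∀ᵐ ω ∂P, V (θ i ω) - V θstar ≤ ∑ j, (fj j * P[gj j|𝓕 (i - 1)]) ω := by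
      have hall : ∀ᵐ ω ∂P, ∀ j, (P[gj j|𝓕 (i - 1)]) ω = gradV (θ i ω) j :=
        (ae_all_iff).2 fun j => hcj j
      filter_upwards [hall] with ω hω
      have heq : ∑ j, (fj j * P[gj j|𝓕 (i - 1)]) ω = ⟪θ i ω - θstar, gradV (θ i ω)⟫ := by
        rw [hinner_eq ω (gradV (θ i ω))]
        exact Finset.sum_congr rfl fun j _ => by simp [Pi.mul_apply, hω j]
      rw [heq]
      have hgrad := sgd_convex_grad hVconv (hgradV (θ i ω) (hΘU (hθΘ i hi ω))) θstar
      have hswap : ⟪θ i ω - θstar, gradV (θ i ω)⟫ = -⟪gradV (θ i ω), θstar - θ i ω⟫ := by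
        rw [real_inner_comm, show θ i ω - θstar = -(θstar - θ i ω) from by abel, inner_neg_right]
      linarith
    have hmono := integral_mono_ae ((hVint i hi).sub (integrable_const (V θstar))) hsum_int hae
    have hbi : ∫ ω, (V (θ i ω) - V θstar) ∂P = b i - V θstar := by
      rw [integral_sub (hVint i hi) (integrable_const _)]
      simp [hb]
    calc b i - V θstar = ∫ ω, (V (θ i ω) - V θstar) ∂P := hbi.symm
      _ ≤ ∫ ω, ∑ j, (fj j * P[gj j|𝓕 (i - 1)]) ω ∂P := hmono
      _ = ∑ j, ∫ ω, (fj j * P[gj j|𝓕 (i - 1)]) ω ∂P :=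
          integral_finset_sum _ fun j _ => hint_cond j
      _ = ∑ j, ∫ ω, (fj j * gj j) ω ∂P := Finset.sum_congr rfl fun j _ => hIj j
      _ = ∫ ω, ∑ j, (fj j * gj j) ω ∂P := (integral_finset_sum _ fun j _ => hfgj_int j).symm
      _ = ∫ ω, ⟪θ i ω - θstar, g i ω⟫ ∂P :=
          integral_congr_ae (ae_of_all _ fun ω => (hinner_eq ω (g i ω)).symm)
  -- the one-step inequality
  have key : ∀ i, 1 ≤ i → 2 * C * (b i - V θstar) ≤
      Real.sqrt i * (a i - a (i + 1)) + C ^ 2 * G ^ 2 * (1 / Real.sqrt i) := by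
    intro i hi
    have hi0 : (0 : ℝ) < i := by exact_mod_cast Nat.lt_of_lt_of_le Nat.zero_lt_one hi
    have hs : 0 < Real.sqrt i := Real.sqrt_pos.2 hi0
    set γ : ℝ := C / Real.sqrt i with hγ
    have hγ0 : 0 < γ := div_pos hC hs
    -- pointwise inequality
    have hpt : ∀ ω, ‖θ (i + 1) ω - θstar‖ ^ 2 ≤
        ‖θ i ω - θstar‖ ^ 2 - 2 * γ * ⟪θ i ω - θstar, g i ω⟫ + γ ^ 2 * ‖g i ω‖ ^ 2 := by
      intro ω
      set u : EuclideanSpace ℝ (Fin p) := θ i ω - γ • g i ω with hu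
      have hle : ‖θ (i + 1) ω - θstar‖ ≤ ‖u - θstar‖ := by
        rw [hrec i hi ω]
        exact sgd_proj_le hΘconv (hproj u).1 hθstar (hproj u).2
      have hsq : ‖θ (i + 1) ω - θstar‖ ^ 2 ≤ ‖u - θstar‖ ^ 2 :=
        pow_le_pow_left₀ (norm_nonneg _) hle 2
      have hexp : ‖u - θstar‖ ^ 2 =
          ‖θ i ω - θstar‖ ^ 2 - 2 * γ * ⟪θ i ω - θstar, g i ω⟫ + γ ^ 2 * ‖g i ω‖ ^ 2 := by
        have h1 : u - θstar = (θ i ω - θstar) - γ • g i ω := by rw [hu]; abel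
        rw [h1, norm_sub_sq_real, real_inner_smul_right, norm_smul]
        rw [Real.norm_eq_abs, abs_of_pos hγ0]
        ring
      linarith [hexp ▸ hsq]
    -- integrability of the inner product
    have hinner_int : Integrable (fun ω => ⟪θ i ω - θstar, g i ω⟫) P := by
      refine Integrable.mono' (((hgint i).norm.const_mul D)) ?_ (ae_of_all _ fun ω => ?_)
      · exact (((hθm0 i hi).sub measurable_const).aemeasurable.inner
          (hgl2 i).aestronglyMeasurable.aemeasurable).aestronglyMeasurable
      · calc ‖⟪θ i ω - θstar, g i ω⟫‖ ≤ ‖θ i ω - θstar‖ * ‖g i ω‖ :=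
              abs_real_inner_le_norm _ _
          _ ≤ D * ‖g i ω‖ :=
              mul_le_mul_of_nonneg_right (hnormD i hi ω) (norm_nonneg _)
    -- integrate the pointwise inequality
    have hstep : a (i + 1) ≤ a i - 2 * γ * (∫ ω, ⟪θ i ω - θstar, g i ω⟫ ∂P)
        + γ ^ 2 * (∫ ω, ‖g i ω‖ ^ 2 ∂P) := by
      have hRint : Integrable (fun ω =>
          ‖θ i ω - θstar‖ ^ 2 - 2 * γ * ⟪θ i ω - θstar, g i ω⟫ + γ ^ 2 * ‖g i ω‖ ^ 2) P :=
        ((hXint i hi).sub (hinner_int.const_mul _)).add ((hg2int i).const_mul _)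
      have h1 : a (i + 1) ≤ ∫ ω, (‖θ i ω - θstar‖ ^ 2
          - 2 * γ * ⟪θ i ω - θstar, g i ω⟫ + γ ^ 2 * ‖g i ω‖ ^ 2) ∂P := by
        simp only [ha]
        exact integral_mono (hXint (i + 1) (by omega)) hRint hpt
      have e1 : ∫ ω, (‖θ i ω - θstar‖ ^ 2
          - 2 * γ * ⟪θ i ω - θstar, g i ω⟫ + γ ^ 2 * ‖g i ω‖ ^ 2) ∂P
          = (∫ ω, (‖θ i ω - θstar‖ ^ 2 - 2 * γ * ⟪θ i ω - θstar, g i ω⟫) ∂P)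
            + ∫ ω, γ ^ 2 * ‖g i ω‖ ^ 2 ∂P :=
        integral_add ((hXint i hi).sub (hinner_int.const_mul _)) ((hg2int i).const_mul _)
      have e2 : ∫ ω, (‖θ i ω - θstar‖ ^ 2 - 2 * γ * ⟪θ i ω - θstar, g i ω⟫) ∂P
          = (∫ ω, ‖θ i ω - θstar‖ ^ 2 ∂P)
            - ∫ ω, 2 * γ * ⟪θ i ω - θstar, g i ω⟫ ∂P :=
        integral_sub (hXint i hi) (hinner_int.const_mul _)
      have e3 : ∫ ω, 2 * γ * ⟪θ i ω - θstar, g i ω⟫ ∂P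
          = 2 * γ * ∫ ω, ⟪θ i ω - θstar, g i ω⟫ ∂P := integral_const_mul _ _
      have e4 : ∫ ω, γ ^ 2 * ‖g i ω‖ ^ 2 ∂P = γ ^ 2 * ∫ ω, ‖g i ω‖ ^ 2 ∂P :=
        integral_const_mul _ _
      have ea : a i = ∫ ω, ‖θ i ω - θstar‖ ^ 2 ∂P := by simp only [ha]
      linarith [h1, e1, e2, e3, e4]
    have h5 : 2 * γ * (b i - V θstar) ≤ 2 * γ * (∫ ω, ⟪θ i ω - θstar, g i ω⟫ ∂P) :=
      mul_le_mul_of_nonneg_left (hIlow i hi) (by positivity)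
    have h6 : γ ^ 2 * (∫ ω, ‖g i ω‖ ^ 2 ∂P) ≤ γ ^ 2 * G ^ 2 :=
      mul_le_mul_of_nonneg_left (hJ i hi) (by positivity)
    have hfin2 : a (i + 1) ≤ a i - 2 * γ * (b i - V θstar) + γ ^ 2 * G ^ 2 := by linarith
    -- multiply by √i
    have hst : Real.sqrt i * (a i - 2 * γ * (b i - V θstar) + γ ^ 2 * G ^ 2)
        = Real.sqrt i * a i - 2 * C * (b i - V θstar) + C ^ 2 * G ^ 2 * (1 / Real.sqrt i) := by
      have hne : Real.sqrt i ≠ 0 := ne_of_gt hs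
      rw [hγ]
      field_simp
    have hmul := mul_le_mul_of_nonneg_left hfin2 hs.le
    rw [hst] at hmul
    have hring : Real.sqrt i * (a i - a (i + 1)) = Real.sqrt i * a i - Real.sqrt i * a (i + 1) := by
      ring
    linarith
  -- summation lemmas
  have T1 : ∀ N : ℕ, (∑ i ∈ Finset.Icc 1 N, Real.sqrt i * (a i - a (i + 1)))
      ≤ D ^ 2 * Real.sqrt N - Real.sqrt N * a (N + 1) := by
    intro N
    induction N with
    | zero => simp
    | succ N ih =>
      rw [Finset.sum_Icc_succ_top (by omega : 1 ≤ N + 1)]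
      push_cast
      have h1 : Real.sqrt N ≤ Real.sqrt ((N : ℝ) + 1) := Real.sqrt_le_sqrt (by linarith)
      have h2 : a (N + 1) ≤ D ^ 2 := haD (N + 1) (by omega)
      have hprod := mul_nonneg (sub_nonneg.2 h1) (sub_nonneg.2 h2)
      nlinarith [hprod, ih]
  have T2 : ∀ N : ℕ, (∑ i ∈ Finset.Icc 1 N, 1 / Real.sqrt i) ≤ 2 * Real.sqrt N := by
    intro N
    induction N with
    | zero => simp
    | succ N ih =>
      rw [Finset.sum_Icc_succ_top (by omega : 1 ≤ N + 1)]
      push_cast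
      have ht : 0 < Real.sqrt ((N : ℝ) + 1) := Real.sqrt_pos.2 (by positivity)
      have hs0 : 0 ≤ Real.sqrt (N : ℝ) := Real.sqrt_nonneg _
      have h1 : Real.sqrt (N : ℝ) ^ 2 = N := Real.sq_sqrt (by positivity)
      have h2 : Real.sqrt ((N : ℝ) + 1) ^ 2 = (N : ℝ) + 1 := Real.sq_sqrt (by positivity)
      have hkey : 1 / Real.sqrt ((N : ℝ) + 1)
          ≤ 2 * (Real.sqrt ((N : ℝ) + 1) - Real.sqrt (N : ℝ)) := by
        rw [div_le_iff₀ ht]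
        nlinarith [sq_nonneg (Real.sqrt ((N : ℝ) + 1) - Real.sqrt (N : ℝ))]
      linarith
  -- assemble the sums
  have hsum1 : ∑ i ∈ Finset.Icc 1 n, (2 * C * (b i - V θstar)) ≤
      ∑ i ∈ Finset.Icc 1 n, (Real.sqrt i * (a i - a (i + 1)) + C ^ 2 * G ^ 2 * (1 / Real.sqrt i)) :=
    Finset.sum_le_sum fun i hi' => key i (Finset.mem_Icc.mp hi').1
  rw [Finset.sum_add_distrib, ← Finset.mul_sum, ← Finset.mul_sum] at hsum1
  have h2 := T1 n
  have h3 : C ^ 2 * G ^ 2 * (∑ i ∈ Finset.Icc 1 n, 1 / Real.sqrt i)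
      ≤ C ^ 2 * G ^ 2 * (2 * Real.sqrt n) := mul_le_mul_of_nonneg_left (T2 n) (by positivity)
  have h5 : 0 ≤ Real.sqrt n * a (n + 1) := mul_nonneg (Real.sqrt_nonneg _) (ha0 _)
  have hLHS : ∑ i ∈ Finset.Icc 1 n, (b i - V θstar)
      = (∑ i ∈ Finset.Icc 1 n, b i) - n * V θstar := by
    rw [Finset.sum_sub_distrib, Finset.sum_const, Nat.card_Icc]
    simp [nsmul_eq_mul]
  rw [hLHS] at hsum1
  set S := ∑ i ∈ Finset.Icc 1 n, b i with hS
  set K : ℝ := D ^ 2 / (2 * C) + C * G ^ 2 with hK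
  have hK2 : 2 * C * (K * Real.sqrt n)
      = D ^ 2 * Real.sqrt n + 2 * C ^ 2 * G ^ 2 * Real.sqrt n := by
    rw [hK]; field_simp
  have hSle : S - n * V θstar ≤ K * Real.sqrt n := by
    have h2C : (0 : ℝ) < 2 * C := by linarith
    refine le_of_mul_le_mul_left ?_ h2C
    rw [hK2]
    linarith
  have hn0 : (0 : ℝ) < n := by exact_mod_cast hn
  have hsn : 0 < Real.sqrt n := Real.sqrt_pos.2 hn0
  have hrpow : (n : ℝ) ^ ((3 : ℝ) / 2) = n * Real.sqrt n := by
    rw [show ((3 : ℝ) / 2) = 1 + 1 / 2 by norm_num, Real.rpow_add hn0, Real.rpow_one,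
      Real.sqrt_eq_rpow]
  rw [hrpow]
  have hss : Real.sqrt (n : ℝ) * Real.sqrt (n : ℝ) = (n : ℝ) := Real.mul_self_sqrt hn0.le
  have hident : V θstar / n + K / ((n : ℝ) * Real.sqrt n)
      = (1 / (n : ℝ) ^ 2) * ((n : ℝ) * V θstar + K * Real.sqrt n) := by
    field_simp
    linear_combination (-K) * hss
  rw [hident]
  exact mul_le_mul_of_nonneg_left (by linarith) (by positivity)
end

section
/- (Finiteness of the gradient bound G; appendix claim of Theorem 2) Suppose Θ ⊆ ℝ^p is nonempty, convex and compact, and Θ is contained in the interior of {θ : K(θ) < ∞}, where K(θ) = ∫ φ⁴(x)f⁴(x)/f_θ³(x) dx. Then G² := sup_{θ∈Θ} ∫ ‖∇A(θ) − T(x)‖² · (φ⁴(x)f⁴(x)/f_θ³(x)) dx is finite; equivalently, sup_{θ∈Θ} E_{X∼f_θ} ‖(∇A(θ) − T(X)) φ²(X)f²(X)/f_θ²(X)‖² < ∞. -/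
open MeasureTheory Real
open scoped ENNReal RealInnerProductSpace

lemma aux_sq_le_exp (t : ℝ) (ht : 0 ≤ t) : t ^ 2 ≤ 4 * Real.exp t := by
  have h1 := Real.add_one_le_exp (t/2)
  have h2 : Real.exp (t/2) * Real.exp (t/2) = Real.exp t := by
    rw [← Real.exp_add]; ring_nf
  nlinarith [Real.exp_pos (t/2)]

lemma aux_norm_le_sum {p : ℕ} (y : EuclideanSpace ℝ (Fin p)) : ‖y‖ ≤ ∑ i, |y i| := by
  rw [EuclideanSpace.norm_eq]
  have h1 : ∑ i, ‖y i‖ ^ 2 ≤ (∑ i, |y i|) ^ 2 := by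
    simpa [Real.norm_eq_abs] using
      Finset.sum_sq_le_sq_sum_of_nonneg (s := Finset.univ) (f := fun i => |y i|)
        (fun i _ => abs_nonneg _)
  calc Real.sqrt (∑ i, ‖y i‖ ^ 2) ≤ Real.sqrt ((∑ i, |y i|) ^ 2) := Real.sqrt_le_sqrt h1
  _ = ∑ i, |y i| := Real.sqrt_sq (Finset.sum_nonneg fun i _ => abs_nonneg _)

lemma aux_exp_abs_le (t : ℝ) : Real.exp |t| ≤ Real.exp t + Real.exp (-t) := by
  rcases abs_cases t with ⟨he, _⟩ | ⟨he, _⟩ <;> rw [he]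
  · exact le_add_of_nonneg_right (Real.exp_pos _).le
  · exact le_add_of_nonneg_left (Real.exp_pos _).le

lemma aux_exp_sum_le {p : ℕ} (c : ℝ) (hc : 0 ≤ c) (y : Fin p → ℝ) :
    Real.exp (c * ∑ i, |y i|) ≤
      ∑ S ∈ (Finset.univ : Finset (Fin p)).powerset,
        Real.exp (c * ∑ i, (if i ∈ S then y i else -(y i))) := by
  calc Real.exp (c * ∑ i, |y i|) = ∏ i, Real.exp (c * |y i|) := by
        rw [← Real.exp_sum, Finset.mul_sum]
  _ ≤ ∏ i, (Real.exp (c * y i) + Real.exp (c * (-(y i)))) := by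
        refine Finset.prod_le_prod (fun i _ => (Real.exp_pos _).le) (fun i _ => ?_)
        have : c * |y i| = |c * y i| := by rw [abs_mul, abs_of_nonneg hc]
        rw [this, mul_neg]
        exact aux_exp_abs_le (c * y i)
  _ = ∑ S ∈ (Finset.univ : Finset (Fin p)).powerset,
        (∏ i ∈ S, Real.exp (c * y i)) * ∏ i ∈ Finset.univ \ S, Real.exp (c * (-(y i))) :=
        Finset.prod_add _ _ _
  _ = ∑ S ∈ (Finset.univ : Finset (Fin p)).powerset,
        Real.exp (c * ∑ i, (if i ∈ S then y i else -(y i))) := by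
        refine Finset.sum_congr rfl fun S hS => ?_
        rw [← Real.exp_sum, ← Real.exp_sum, ← Real.exp_add]
        congr 1
        have h1 : Finset.univ.filter (· ∈ S) = S := by ext i; simp
        have h2 : Finset.univ.filter (fun i => ¬ i ∈ S) = Finset.univ \ S := by ext i; simp
        rw [Finset.mul_sum]
        simp only [mul_ite, mul_neg, Finset.sum_ite, h1, h2]

lemma aux_ratio (N H a b u v : ℝ) (hH : H ≠ 0) :
    N / (Real.exp (3*(u - a)) * H) = Real.exp (3*(a - b) - 3*(u - v)) * (N / (Real.exp (3*(v - b)) * H)) := by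
  have h1 : Real.exp (3*(u-a)) ≠ 0 := Real.exp_ne_zero _
  have h2 : Real.exp (3*(v-b)) ≠ 0 := Real.exp_ne_zero _
  rw [mul_div_assoc', div_eq_div_iff (mul_ne_zero h1 hH) (mul_ne_zero h2 hH)]
  calc N * (Real.exp (3 * (v - b)) * H)
      = (Real.exp ((3 * (a - b) - 3 * (u - v)) + 3 * (u - a))) * (N * H) := by
        rw [show (3 * (a - b) - 3 * (u - v)) + 3 * (u - a) = 3 * (v-b) by ring]
        ring
  _ = Real.exp (3 * (a - b) - 3 * (u - v)) * N * (Real.exp (3 * (u - a)) * H) := by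
        rw [Real.exp_add]
        ring

set_option maxHeartbeats 1000000 in
/-- finiteness of the gradient bound `G`: if `Θ` is nonempty, convex and
compact and contained in the interior of `{θ : K(θ) < ∞}`, where
`K(θ) = ∫ φ⁴f⁴/f_θ³`, then
`G² = sup_{θ∈Θ} ∫ ‖∇A(θ) − T(x)‖² φ⁴(x)f⁴(x)/f_θ³(x) dx` is finite. -/
theorem gradient_bound_finite {k p : ℕ}
    (T : EuclideanSpace ℝ (Fin k) → EuclideanSpace ℝ (Fin p)) (hT : Measurable T)
    (h : EuclideanSpace ℝ (Fin k) → ℝ) (hh : Measurable h) (hh0 : ∀ x, 0 ≤ h x)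
    (Z : EuclideanSpace ℝ (Fin p) → ℝ≥0∞)
    (hZ : ∀ θ, Z θ = ∫⁻ x, ENNReal.ofReal (Real.exp ⟪θ, T x⟫ * h x))
    (A : EuclideanSpace ℝ (Fin p) → ℝ) (hA : ∀ θ, A θ = Real.log (Z θ).toReal)
    (fθ : EuclideanSpace ℝ (Fin p) → EuclideanSpace ℝ (Fin k) → ℝ)
    (hfθ : ∀ θ x, fθ θ x = Real.exp (⟪θ, T x⟫ - A θ) * h x)
    (f φ : EuclideanSpace ℝ (Fin k) → ℝ) (hfm : Measurable f) (hφm : Measurable φ)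
    (hf0 : ∀ x, 0 ≤ f x) (hf1 : ∫⁻ x, ENNReal.ofReal (f x) = 1)
    (hφf : Integrable (fun x => φ x * f x))
    (K : EuclideanSpace ℝ (Fin p) → ℝ≥0∞)
    (hK : ∀ θ, K θ = ∫⁻ x, ENNReal.ofReal ((φ x) ^ 4 * (f x) ^ 4 / (fθ θ x) ^ 3))
    (Θ : Set (EuclideanSpace ℝ (Fin p))) (hΘne : Θ.Nonempty) (hΘconv : Convex ℝ Θ)
    (hΘcomp : IsCompact Θ)
    (hΘK : Θ ⊆ interior {θ | Z θ ≠ ⊤ ∧ K θ ≠ ⊤})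
    (hpos : ∀ θ ∈ Θ, ∀ x, φ x * f x ≠ 0 → 0 < fθ θ x)
    (gradA : EuclideanSpace ℝ (Fin p) → EuclideanSpace ℝ (Fin p))
    (hgradA : ∀ θ ∈ interior {θ | Z θ ≠ ⊤ ∧ K θ ≠ ⊤}, HasGradientAt A (gradA θ) θ) :
    (⨆ θ ∈ Θ, ∫⁻ x, ENNReal.ofReal
        (‖gradA θ - T x‖ ^ 2 * ((φ x) ^ 4 * (f x) ^ 4 / (fθ θ x) ^ 3))) < ⊤ := by
  classical
  have mT : ∀ θ : EuclideanSpace ℝ (Fin p), Measurable fun x => (⟪θ, T x⟫ : ℝ) := fun θ =>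
    (Continuous.measurable (continuous_const.inner continuous_id)).comp hT
  have mfθ : ∀ θ, Measurable (fθ θ) := by
    intro θ
    have e : fθ θ = fun x => Real.exp (⟪θ, T x⟫ - A θ) * h x := funext (hfθ θ)
    rw [e]; exact (((mT θ).sub measurable_const).exp).mul hh
  have mgg : ∀ θ, Measurable fun x => ENNReal.ofReal ((φ x)^4 * (f x)^4 / (fθ θ x)^3) :=
    fun θ => ((((hφm.pow_const 4).mul (hfm.pow_const 4)).div
      ((mfθ θ).pow_const 3))).ennreal_ofReal
  by_cases hae : ∀ᵐ x, h x = 0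
  · -- degenerate case : everything vanishes
    have hzero : ∀ θ : EuclideanSpace ℝ (Fin p), (∫⁻ x, ENNReal.ofReal
        (‖gradA θ - T x‖ ^ 2 * ((φ x) ^ 4 * (f x) ^ 4 / (fθ θ x) ^ 3))) = 0 := by
      intro θ
      rw [← lintegral_zero]
      apply lintegral_congr_ae
      filter_upwards [hae] with x hx
      rw [hfθ θ x, hx, mul_zero]
      norm_num
    refine lt_of_le_of_lt (iSup₂_le fun θ _ => (hzero θ).le) ?_
    simp
  -- main case
  have hZpos : ∀ θ, Z θ ≠ 0 := by
    intro θ h0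
    apply hae
    rw [hZ θ, lintegral_eq_zero_iff (show Measurable fun x => ENNReal.ofReal (Real.exp ⟪θ, T x⟫ * h x) from (((mT θ).exp).mul hh).ennreal_ofReal)] at h0
    filter_upwards [h0] with x hx
    simp only [Pi.zero_apply, ENNReal.ofReal_eq_zero] at hx
    nlinarith [Real.exp_pos (⟪θ, T x⟫ : ℝ), hh0 x]
  obtain ⟨δ, hδ, hthick⟩ :=
    hΘcomp.exists_thickening_subset_open isOpen_interior hΘK
  set ρ := δ / 2 with hρdef
  have hρ : 0 < ρ := half_pos hδ
  set C := Metric.cthickening ρ Θ with hCdef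
  have hCS : C ⊆ interior {θ | Z θ ≠ ⊤ ∧ K θ ≠ ⊤} :=
    (Metric.cthickening_subset_thickening' hδ (by simp [hρdef]; linarith) Θ).trans hthick
  have hCprop : ∀ θ ∈ C, Z θ ≠ ⊤ ∧ K θ ≠ ⊤ := by
    intro θ hθ
    exact (interior_subset (hCS hθ) : θ ∈ {θ | Z θ ≠ ⊤ ∧ K θ ≠ ⊤})
  have hΘC : Θ ⊆ C := Metric.self_subset_cthickening Θ
  have hCcomp : IsCompact C := hΘcomp.cthickening
  have hCconv : Convex ℝ C := hΘconv.cthickening _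
  have hballC : ∀ θ ∈ Θ, ∀ w : EuclideanSpace ℝ (Fin p), ‖w‖ ≤ ρ → θ - w ∈ C := by
    intro θ hθ w hw
    refine Metric.mem_cthickening_of_dist_le (θ - w) θ ρ Θ hθ ?_
    rw [dist_eq_norm]
    simpa using hw
  have hAcont : ContinuousOn A C := fun θ hθ =>
    ((hgradA θ (hCS hθ)).hasFDerivAt.differentiableAt.continuousAt).continuousWithinAt
  obtain ⟨M, hM⟩ := hCcomp.exists_bound_of_continuousOn hAcont
  have hMabs : ∀ θ ∈ C, |A θ| ≤ M := by
    intro θ hθ; simpa [Real.norm_eq_abs] using hM θ hθ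
  have hM0 : 0 ≤ M := by
    obtain ⟨θ₀, hθ₀⟩ := hΘne
    exact (abs_nonneg _).trans (hMabs θ₀ (hΘC hθ₀))
  -- convexity of A on C
  have hAconvex : ConvexOn ℝ C A := by
    refine ⟨hCconv, fun θ₁ h₁ θ₂ h₂ a b ha hb hab => ?_⟩
    rcases ha.eq_or_lt with rfl | ha'
    · have hb1 : b = 1 := by linarith
      simp [hb1]
    rcases hb.eq_or_lt with rfl | hb'
    · have ha1 : a = 1 := by linarith
      simp [ha1]
    have hmem : a • θ₁ + b • θ₂ ∈ C := hCconv h₁ h₂ ha hb hab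
    have hZ1 := (hCprop θ₁ h₁).1
    have hZ2 := (hCprop θ₂ h₂).1
    have hZc := (hCprop _ hmem).1
    have hhold : Z (a • θ₁ + b • θ₂) ≤ Z θ₁ ^ a * Z θ₂ ^ b := by
      rw [hZ, hZ, hZ]
      have hpt : ∀ x, ENNReal.ofReal (Real.exp ⟪a • θ₁ + b • θ₂, T x⟫ * h x)
          = (ENNReal.ofReal (Real.exp ⟪θ₁, T x⟫ * h x)) ^ a
            * (ENNReal.ofReal (Real.exp ⟪θ₂, T x⟫ * h x)) ^ b := by
        intro x
        have hnn1 : (0:ℝ) ≤ Real.exp ⟪θ₁, T x⟫ * h x := mul_nonneg (Real.exp_nonneg _) (hh0 x)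
        have hnn2 : (0:ℝ) ≤ Real.exp ⟪θ₂, T x⟫ * h x := mul_nonneg (Real.exp_nonneg _) (hh0 x)
        rw [ENNReal.ofReal_rpow_of_nonneg hnn1 ha,
          ENNReal.ofReal_rpow_of_nonneg hnn2 hb,
          ← ENNReal.ofReal_mul (Real.rpow_nonneg hnn1 a)]
        congr 1
        rw [Real.mul_rpow (Real.exp_nonneg _) (hh0 x),
          Real.mul_rpow (Real.exp_nonneg _) (hh0 x),
          ← Real.exp_mul, ← Real.exp_mul,
          inner_add_left, real_inner_smul_left, real_inner_smul_left, Real.exp_add]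
        have e3 : h x ^ a * h x ^ b = h x := by
          rw [← Real.rpow_add' (hh0 x) (by rw [hab]; norm_num), hab, Real.rpow_one]
        calc Real.exp (a * ⟪θ₁, T x⟫) * Real.exp (b * ⟪θ₂, T x⟫) * h x
            = Real.exp (⟪θ₁, T x⟫ * a) * Real.exp (⟪θ₂, T x⟫ * b) * (h x ^ a * h x ^ b) := by
              rw [e3]; ring_nf
        _ = Real.exp (⟪θ₁, T x⟫ * a) * h x ^ a * (Real.exp (⟪θ₂, T x⟫ * b) * h x ^ b) := by
              ring
      rw [lintegral_congr hpt]
      exact ENNReal.lintegral_mul_norm_pow_le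
        ((((mT θ₁).exp).mul hh).ennreal_ofReal).aemeasurable
        ((((mT θ₂).exp).mul hh).ennreal_ofReal).aemeasurable ha hb hab
    have hfin2 : Z θ₁ ^ a * Z θ₂ ^ b ≠ ⊤ :=
      ENNReal.mul_ne_top (ENNReal.rpow_ne_top_of_nonneg ha hZ1)
        (ENNReal.rpow_ne_top_of_nonneg hb hZ2)
    have htR : (Z (a • θ₁ + b • θ₂)).toReal ≤ (Z θ₁).toReal ^ a * (Z θ₂).toReal ^ b := by
      have := ENNReal.toReal_mono hfin2 hhold
      rwa [ENNReal.toReal_mul, ← ENNReal.toReal_rpow, ← ENNReal.toReal_rpow] at this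
    have hp1 : 0 < (Z θ₁).toReal := ENNReal.toReal_pos (hZpos _) hZ1
    have hp2 : 0 < (Z θ₂).toReal := ENNReal.toReal_pos (hZpos _) hZ2
    have hpc : 0 < (Z (a • θ₁ + b • θ₂)).toReal := ENNReal.toReal_pos (hZpos _) hZc
    rw [hA, hA, hA]
    calc Real.log (Z (a • θ₁ + b • θ₂)).toReal
        ≤ Real.log ((Z θ₁).toReal ^ a * (Z θ₂).toReal ^ b) := Real.log_le_log hpc htR
    _ = a * Real.log (Z θ₁).toReal + b * Real.log (Z θ₂).toReal := by
        rw [Real.log_mul (by positivity) (by positivity),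
          Real.log_rpow hp1, Real.log_rpow hp2]
  -- gradient bound
  have hgradbd : ∀ θ ∈ Θ, ‖gradA θ‖ ≤ 2 * M / ρ := by
    intro θ hθ
    by_cases hG : gradA θ = (0 : EuclideanSpace ℝ (Fin p))
    · rw [hG, norm_zero]; positivity
    have hGn : (0:ℝ) < ‖gradA θ‖ := norm_pos_iff.mpr hG
    set y := θ + (ρ / ‖gradA θ‖) • gradA θ with hydef
    have hyθ : y - θ = (ρ / ‖gradA θ‖) • gradA θ := by rw [hydef]; abel
    have hyC : y ∈ C := by
      have : θ - -((ρ / ‖gradA θ‖) • gradA θ) = y := by rw [hydef]; abel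
      rw [← this]
      refine hballC θ hθ _ ?_
      rw [norm_neg, norm_smul, Real.norm_eq_abs, abs_of_nonneg (by positivity),
        div_mul_cancel₀ _ (ne_of_gt hGn)]
    have hcderiv : HasDerivAt (fun t : ℝ => θ + t • (y - θ)) (y - θ) 0 := by
      have h1 : HasDerivAt (fun t : ℝ => t • (y - θ)) ((1:ℝ) • (y - θ)) 0 :=
        (hasDerivAt_id 0).smul_const (y - θ)
      simpa [one_smul] using h1.const_add θ
    have hAt : HasDerivAt (A ∘ fun t : ℝ => θ + t • (y - θ)) ⟪gradA θ, y - θ⟫ 0 := by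
      have hF : HasFDerivAt A (InnerProductSpace.toDual ℝ _ (gradA θ))
          ((fun t : ℝ => θ + t • (y - θ)) 0) := by
        simp only [zero_smul, add_zero]
        exact (hgradA θ (hCS (hΘC hθ))).hasFDerivAt
      have h2 := hF.comp_hasDerivAt 0 hcderiv
      have h3 : (InnerProductSpace.toDual ℝ (EuclideanSpace ℝ (Fin p)) (gradA θ)) (y - θ)
          = ⟪gradA θ, y - θ⟫ := InnerProductSpace.toDual_apply_apply
      rwa [h3] at h2
    have hconvline : ConvexOn ℝ ((fun t : ℝ => θ + t • (y - θ)) ⁻¹' C)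
        (A ∘ fun t : ℝ => θ + t • (y - θ)) := by
      have haff : ConvexOn ℝ (⇑(AffineMap.lineMap θ y) ⁻¹' C) (A ∘ ⇑(AffineMap.lineMap θ y)) :=
        hAconvex.comp_affineMap (AffineMap.lineMap θ y)
      have hco : ⇑(AffineMap.lineMap θ y) = fun t : ℝ => θ + t • (y - θ) := by
        funext t
        rw [AffineMap.lineMap_apply_module']
        abel
      rwa [hco] at haff
    have h0mem : (0:ℝ) ∈ (fun t : ℝ => θ + t • (y - θ)) ⁻¹' C := by
      simp only [Set.mem_preimage, zero_smul, add_zero]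
      exact hΘC hθ
    have h1mem : (1:ℝ) ∈ (fun t : ℝ => θ + t • (y - θ)) ⁻¹' C := by
      simp only [Set.mem_preimage, one_smul]
      have : θ + (y - θ) = y := by abel
      rw [this]; exact hyC
    have hslope := hconvline.le_slope_of_hasDerivAt h0mem h1mem zero_lt_one hAt
    rw [slope_def_field] at hslope
    simp only [Function.comp_apply, one_smul, zero_smul, add_zero, sub_zero, div_one] at hslope
    have hyy : θ + (y - θ) = y := by abel
    rw [hyy] at hslope
    have hinner : ⟪gradA θ, y - θ⟫ = ρ * ‖gradA θ‖ := by
      rw [hyθ, real_inner_smul_right, real_inner_self_eq_norm_sq]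
      field_simp
    rw [hinner] at hslope
    have hb1 := hMabs y hyC
    have hb2 := hMabs θ (hΘC hθ)
    rw [le_div_iff₀ hρ]
    have hb1' := abs_le.mp hb1
    have hb2' := abs_le.mp hb2
    nlinarith

  -- parameters
  obtain ⟨M₁, hM₁def⟩ : ∃ c : ℝ, c = 2 * M / ρ := ⟨_, rfl⟩
  have hM₁0 : 0 ≤ M₁ := by rw [hM₁def]; positivity
  obtain ⟨r, hrdef⟩ : ∃ c : ℝ, c = ρ / (2 * (Real.sqrt p + 1)) := ⟨_, rfl⟩
  have hsq : (0:ℝ) ≤ Real.sqrt p := Real.sqrt_nonneg _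
  have hr0 : 0 < r := by rw [hrdef]; positivity
  
  have hqρ : ρ = r * (2 * (Real.sqrt p + 1)) := by
    rw [hrdef, div_mul_cancel₀ _ (ne_of_gt (show (0:ℝ) < 2 * (Real.sqrt p + 1) by positivity))]
  have hruse : 2 * r * Real.sqrt p ≤ ρ := by
    rw [hqρ]
    nlinarith [hr0]
  -- sign vectors
  obtain ⟨uvec, huvec_apply⟩ : ∃ u : Finset (Fin p) → EuclideanSpace ℝ (Fin p),
      ∀ S i, u S i = if i ∈ S then (1:ℝ) else -1 :=
    ⟨fun S => (WithLp.equiv 2 (Fin p → ℝ)).symm (fun i => if i ∈ S then (1:ℝ) else -1),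
      fun S i => rfl⟩
  have huvec_norm : ∀ S, ‖uvec S‖ = Real.sqrt p := by
    intro S
    rw [EuclideanSpace.norm_eq]
    have he : ∀ i : Fin p, ‖uvec S i‖ ^ 2 = 1 := by
      intro i; rw [huvec_apply]; by_cases hi : i ∈ S <;> simp [hi]
    rw [Finset.sum_congr rfl (fun i _ => he i), Finset.sum_const, Finset.card_univ,
      Fintype.card_fin, nsmul_eq_mul, mul_one]
  have huvec_inner : ∀ S (v : EuclideanSpace ℝ (Fin p)),
      ⟪uvec S, v⟫ = ∑ i, (if i ∈ S then v i else -(v i)) := by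
    intro S v
    rw [PiLp.inner_apply]
    refine Finset.sum_congr rfl fun i _ => ?_
    rw [RCLike.inner_apply, starRingEnd_apply, star_trivial, huvec_apply]
    by_cases hi : i ∈ S <;> simp [hi]
  have hθsC : ∀ θ₀ ∈ Θ, ∀ S, θ₀ - (2*r) • uvec S ∈ C := by
    intro θ₀ h₀ S
    refine hballC θ₀ h₀ _ ?_
    rw [norm_smul, Real.norm_eq_abs, abs_of_nonneg (by positivity), huvec_norm]
    exact hruse
  -- everywhere: either h > 0 or the numerator vanishes
  obtain ⟨θstar, hθstar⟩ := hΘne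
  have hOr : ∀ x, 0 < h x ∨ φ x * f x = 0 := by
    intro x
    by_cases hx : φ x * f x = 0
    · right; exact hx
    · left
      have h1 := hpos θstar hθstar x hx
      rw [hfθ] at h1
      by_contra h2
      push_neg at h2
      have hz : h x = 0 := le_antisymm h2 (hh0 x)
      rw [hz, mul_zero] at h1; exact lt_irrefl 0 h1
  -- the change-of-parameter identity
  have keyP : ∀ θ θ' : EuclideanSpace ℝ (Fin p), ∀ x,
      φ x ^ 4 * f x ^ 4 / fθ θ x ^ 3
        = Real.exp (3*(A θ - A θ') - 3*⟪θ - θ', T x⟫)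
            * (φ x ^ 4 * f x ^ 4 / fθ θ' x ^ 3) := by
    intro θ θ' x
    rcases hOr x with hx | hx
    · rw [hfθ, hfθ]
      have hhne : h x ≠ 0 := ne_of_gt hx
      have e1 : ∀ u : ℝ, Real.exp u ^ 3 = Real.exp (3*u) := by
        intro u; rw [show (3:ℝ)*u = u+u+u by ring, Real.exp_add, Real.exp_add]; ring
      rw [mul_pow, mul_pow, e1, e1, inner_sub_left]
      exact aux_ratio _ _ _ _ _ _ (pow_ne_zero 3 hhne)
    · have hzero : φ x ^ 4 * f x ^ 4 = 0 := by rw [← mul_pow, hx]; norm_num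
      rw [hzero]
      simp
  -- constants
  obtain ⟨c₁, hc₁def⟩ : ∃ c : ℝ, c = 4/(9*r^2) := ⟨_, rfl⟩
  have hc₁0 : 0 ≤ c₁ := by rw [hc₁def]; positivity
  obtain ⟨C₀, hC₀def⟩ : ∃ c : ℝ, c = 2 * M₁^2 + 2*c₁ := ⟨_, rfl⟩
  have hC₀0 : 0 ≤ C₀ := by rw [hC₀def]; positivity
  have hr0' : r ≠ 0 := ne_of_gt hr0
  obtain ⟨Cst, hCstdef⟩ : ∃ c : ℝ, c = C₀ * Real.exp (6*M) * Real.exp (6*M) := ⟨_, rfl⟩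
  have hCst0 : 0 ≤ Cst := by rw [hCstdef]; positivity
  -- the pointwise bound
  have hptw : ∀ θ₀ ∈ Θ, ∀ θ ∈ Θ, dist θ θ₀ < r → ∀ x,
      ‖gradA θ - T x‖ ^ 2 * (φ x ^ 4 * f x ^ 4 / fθ θ x ^ 3)
        ≤ Cst * ∑ S ∈ (Finset.univ : Finset (Fin p)).powerset,
            (φ x ^ 4 * f x ^ 4 / fθ (θ₀ - (2*r) • uvec S) x ^ 3) := by
    intro θ₀ h₀ θ hθ hd x
    have hQnn : ∀ θ' : EuclideanSpace ℝ (Fin p),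
        0 ≤ φ x ^ 4 * f x ^ 4 / fθ θ' x ^ 3 := fun θ' =>
      div_nonneg (by positivity)
        (by rw [hfθ]; exact pow_nonneg (mul_nonneg (Real.exp_nonneg _) (hh0 x)) 3)
    have step1 : ‖gradA θ - T x‖ ^ 2 ≤ 2 * M₁^2 + 2 * ‖T x‖^2 := by
      have h1 : ‖gradA θ - T x‖ ≤ ‖gradA θ‖ + ‖T x‖ := norm_sub_le _ _
      have h2 : ‖gradA θ - T x‖ ^ 2 ≤ (‖gradA θ‖ + ‖T x‖) ^ 2 :=
        pow_le_pow_left₀ (norm_nonneg _) h1 2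
      have h3 := hgradbd θ hθ
      have h4 : ‖gradA θ‖^2 ≤ M₁^2 := by
        rw [hM₁def]
        nlinarith [norm_nonneg (gradA θ)]
      nlinarith [sq_nonneg (‖gradA θ‖ - ‖T x‖)]
    have step2 : 2 * M₁^2 + 2 * ‖T x‖^2 ≤ C₀ * Real.exp (3*r*‖T x‖) := by
      have h1 := aux_sq_le_exp (3*r*‖T x‖) (by positivity)
      have h2 := Real.one_le_exp (show (0:ℝ) ≤ 3*r*‖T x‖ by positivity)
      rw [hC₀def]
      have h3 : ‖T x‖^2 ≤ c₁ * Real.exp (3*r*‖T x‖) := by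
        rw [hc₁def, div_mul_eq_mul_div, le_div_iff₀ (by positivity)]
        nlinarith [norm_nonneg (T x)]
      nlinarith [mul_nonneg (sq_nonneg M₁) (sub_nonneg.mpr h2)]
    have step3 : Real.exp (3*(A θ - A θ₀) - 3*⟪θ - θ₀, T x⟫)
        ≤ Real.exp (6*M + 3*r*‖T x‖) := by
      apply Real.exp_le_exp.mpr
      have h1 := hMabs θ (hΘC hθ)
      have h2 := hMabs θ₀ (hΘC h₀)
      have h3 := abs_real_inner_le_norm (θ - θ₀) (T x)
      have h4 : ‖θ - θ₀‖ < r := by rwa [← dist_eq_norm]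
      have h5 := abs_le.mp h1
      have h6 := abs_le.mp h2
      have h8 : -⟪θ - θ₀, T x⟫ ≤ ‖θ - θ₀‖ * ‖T x‖ := by
        rcases abs_le.mp h3 with ⟨hl, hr'⟩
        linarith
      nlinarith [norm_nonneg (T x), norm_nonneg (θ - θ₀)]
    have step5 : ∀ S ∈ (Finset.univ : Finset (Fin p)).powerset,
        Real.exp (6*r*∑ i, (if i ∈ S then T x i else -(T x i)))
            * (φ x ^ 4 * f x ^ 4 / fθ θ₀ x ^ 3)
          ≤ Real.exp (6*M) * (φ x ^ 4 * f x ^ 4 / fθ (θ₀ - (2*r) • uvec S) x ^ 3) := by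
      intro S _
      have hsub : θ₀ - (θ₀ - (2*r) • uvec S) = (2*r) • uvec S := by abel
      have e5 : Real.exp (6*r*∑ i, (if i ∈ S then T x i else -(T x i)))
            * (φ x ^ 4 * f x ^ 4 / fθ θ₀ x ^ 3)
          = Real.exp (3*(A θ₀ - A (θ₀ - (2*r) • uvec S)))
            * (φ x ^ 4 * f x ^ 4 / fθ (θ₀ - (2*r) • uvec S) x ^ 3) := by
        rw [keyP θ₀ (θ₀ - (2*r) • uvec S) x, hsub, real_inner_smul_left, huvec_inner,
          ← mul_assoc, ← Real.exp_add]
        congr 2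
        ring
      rw [e5]
      apply mul_le_mul_of_nonneg_right _ (hQnn _)
      apply Real.exp_le_exp.mpr
      have h1 := abs_le.mp (hMabs θ₀ (hΘC h₀))
      have h2 := abs_le.mp (hMabs _ (hθsC θ₀ h₀ S))
      linarith
    calc ‖gradA θ - T x‖ ^ 2 * (φ x ^ 4 * f x ^ 4 / fθ θ x ^ 3)
        ≤ (C₀ * Real.exp (3*r*‖T x‖)) * (φ x ^ 4 * f x ^ 4 / fθ θ x ^ 3) :=
          mul_le_mul_of_nonneg_right (step1.trans step2) (hQnn θ)
    _ = (C₀ * Real.exp (3*r*‖T x‖)) * (Real.exp (3*(A θ - A θ₀) - 3*⟪θ - θ₀, T x⟫)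
          * (φ x ^ 4 * f x ^ 4 / fθ θ₀ x ^ 3)) := by rw [← keyP]
    _ ≤ (C₀ * Real.exp (3*r*‖T x‖)) * (Real.exp (6*M + 3*r*‖T x‖)
          * (φ x ^ 4 * f x ^ 4 / fθ θ₀ x ^ 3)) := by
        apply mul_le_mul_of_nonneg_left
          (mul_le_mul_of_nonneg_right step3 (hQnn θ₀)) (by positivity)
    _ = (C₀ * Real.exp (6*M)) * (Real.exp (6*r*‖T x‖)
          * (φ x ^ 4 * f x ^ 4 / fθ θ₀ x ^ 3)) := by
        have he : Real.exp (3*r*‖T x‖) * Real.exp (6*M + 3*r*‖T x‖)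
            = Real.exp (6*M) * Real.exp (6*r*‖T x‖) := by
          rw [← Real.exp_add, ← Real.exp_add]; ring_nf
        calc (C₀ * Real.exp (3*r*‖T x‖)) * (Real.exp (6*M + 3*r*‖T x‖)
              * (φ x ^ 4 * f x ^ 4 / fθ θ₀ x ^ 3))
            = (Real.exp (3*r*‖T x‖) * Real.exp (6*M + 3*r*‖T x‖))
              * (C₀ * (φ x ^ 4 * f x ^ 4 / fθ θ₀ x ^ 3)) := by ring
        _ = (Real.exp (6*M) * Real.exp (6*r*‖T x‖))
              * (C₀ * (φ x ^ 4 * f x ^ 4 / fθ θ₀ x ^ 3)) := by rw [he]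
        _ = _ := by ring
    _ ≤ (C₀ * Real.exp (6*M)) * ((∑ S ∈ (Finset.univ : Finset (Fin p)).powerset,
          Real.exp (6*r*∑ i, (if i ∈ S then T x i else -(T x i))))
          * (φ x ^ 4 * f x ^ 4 / fθ θ₀ x ^ 3)) := by
        apply mul_le_mul_of_nonneg_left
          (mul_le_mul_of_nonneg_right _ (hQnn θ₀)) (by positivity)
        calc Real.exp (6*r*‖T x‖) ≤ Real.exp (6*r*∑ i, |T x i|) := by
              apply Real.exp_le_exp.mpr
              have := aux_norm_le_sum (T x)
              nlinarith
        _ ≤ _ := aux_exp_sum_le (6*r) (by positivity) (fun i => T x i)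
    _ = (C₀ * Real.exp (6*M)) * (∑ S ∈ (Finset.univ : Finset (Fin p)).powerset,
          Real.exp (6*r*∑ i, (if i ∈ S then T x i else -(T x i)))
          * (φ x ^ 4 * f x ^ 4 / fθ θ₀ x ^ 3)) := by rw [Finset.sum_mul]
    _ ≤ (C₀ * Real.exp (6*M)) * (∑ S ∈ (Finset.univ : Finset (Fin p)).powerset,
          Real.exp (6*M) * (φ x ^ 4 * f x ^ 4 / fθ (θ₀ - (2*r) • uvec S) x ^ 3)) := by
        apply mul_le_mul_of_nonneg_left (Finset.sum_le_sum step5) (by positivity)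
    _ = Cst * ∑ S ∈ (Finset.univ : Finset (Fin p)).powerset,
          (φ x ^ 4 * f x ^ 4 / fθ (θ₀ - (2*r) • uvec S) x ^ 3) := by
        rw [← Finset.mul_sum, hCstdef]; ring
  -- the integral bound
  have hFb : ∀ θ₀ ∈ Θ, ∀ θ ∈ Θ, dist θ θ₀ < r →
      (∫⁻ x, ENNReal.ofReal
        (‖gradA θ - T x‖ ^ 2 * (φ x ^ 4 * f x ^ 4 / fθ θ x ^ 3)))
        ≤ ENNReal.ofReal Cst * ∑ S ∈ (Finset.univ : Finset (Fin p)).powerset,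
            K (θ₀ - (2*r) • uvec S) := by
    intro θ₀ h₀ θ hθ hd
    have hQnn : ∀ θ' : EuclideanSpace ℝ (Fin p), ∀ x,
        0 ≤ φ x ^ 4 * f x ^ 4 / fθ θ' x ^ 3 := fun θ' x =>
      div_nonneg (by positivity)
        (by rw [hfθ]; exact pow_nonneg (mul_nonneg (Real.exp_nonneg _) (hh0 x)) 3)
    calc (∫⁻ x, ENNReal.ofReal
          (‖gradA θ - T x‖ ^ 2 * (φ x ^ 4 * f x ^ 4 / fθ θ x ^ 3)))
        ≤ ∫⁻ x, ENNReal.ofReal (Cst * ∑ S ∈ (Finset.univ : Finset (Fin p)).powerset,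
            (φ x ^ 4 * f x ^ 4 / fθ (θ₀ - (2*r) • uvec S) x ^ 3)) :=
          lintegral_mono fun x => ENNReal.ofReal_le_ofReal (hptw θ₀ h₀ θ hθ hd x)
    _ = ∫⁻ x, ENNReal.ofReal Cst * ∑ S ∈ (Finset.univ : Finset (Fin p)).powerset,
            ENNReal.ofReal (φ x ^ 4 * f x ^ 4 / fθ (θ₀ - (2*r) • uvec S) x ^ 3) := by
        refine lintegral_congr fun x => ?_
        rw [ENNReal.ofReal_mul hCst0, ENNReal.ofReal_sum_of_nonneg (fun S _ => hQnn _ x)]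
    _ = ENNReal.ofReal Cst * ∑ S ∈ (Finset.univ : Finset (Fin p)).powerset,
            ∫⁻ x, ENNReal.ofReal (φ x ^ 4 * f x ^ 4 / fθ (θ₀ - (2*r) • uvec S) x ^ 3) := by
        rw [lintegral_const_mul' _ _ ENNReal.ofReal_ne_top,
          lintegral_finset_sum _ (fun S _ => mgg _)]
    _ = ENNReal.ofReal Cst * ∑ S ∈ (Finset.univ : Finset (Fin p)).powerset,
            K (θ₀ - (2*r) • uvec S) := by
        congr 1
        exact Finset.sum_congr rfl fun S _ => (hK _).symm
  -- compactness: finite subcover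
  obtain ⟨t, htΘ, hcover⟩ := hΘcomp.elim_nhds_subcover (fun θ₀ => Metric.ball θ₀ r)
    (fun θ₀ _ => Metric.ball_mem_nhds θ₀ hr0)
  have hBne : (∑ θ₀ ∈ t, (ENNReal.ofReal Cst *
      ∑ S ∈ (Finset.univ : Finset (Fin p)).powerset, K (θ₀ - (2*r) • uvec S))) ≠ ⊤ := by
    rw [← lt_top_iff_ne_top, ENNReal.sum_lt_top]
    intro θ₀ hθ₀
    refine ENNReal.mul_lt_top ENNReal.ofReal_lt_top ?_
    rw [ENNReal.sum_lt_top]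
    intro S _
    exact (hCprop _ (hθsC θ₀ (htΘ θ₀ hθ₀) S)).2.lt_top
  refine lt_of_le_of_lt (iSup₂_le fun θ hθ => ?_) hBne.lt_top
  obtain ⟨θ₀, hθ₀t, hθball⟩ : ∃ θ₀ ∈ t, θ ∈ Metric.ball θ₀ r := by
    have := hcover hθ
    simpa using this
  refine le_trans (hFb θ₀ (htΘ θ₀ hθ₀t) θ hθ (Metric.mem_ball.mp hθball)) ?_
  exact Finset.single_le_sum
    (f := fun θ₀ => ENNReal.ofReal Cst * ∑ S ∈ (Finset.univ : Finset (Fin p)).powerset,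
      K (θ₀ - (2*r) • uvec S)) (fun _ _ => zero_le) hθ₀t
end
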